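/- arXiv:math/0612782 — 3 statements merged into one kernel-verified Lean document; each statement's English description precedes it below -/
import Mathlib

section
/- Let d ≥ 1 be an integer. There exists a constant C > 0 (depending only on d) such that for every integer n ≥ 1, the number S_n of marked admissible proper systems with parameters m = 2nd and σ(i) = min(i, 2nd − i), consisting of exactly 2nd − 1 intervals, satisfies log S_n ≥ 4 d n log n − C n. -/
/-- `IsProperSystem m σ S` : `S` is a *proper system* with parameters `(m, σ)`, i.e. a finite
multiset of closed intervals `[a,b]` with integer endpoints (encoded as pairs `(a,b)` of
integers, one-point intervals `a = b` allowed) contained in `[0,m]`, such that for every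
integer `i ∈ [0,m]` the number of intervals of `S` containing `i`, counted with multiplicity,
equals `σ i`. -/
def IsProperSystem (m : ℤ) (σ : ℤ → ℕ) (S : Multiset (ℤ × ℤ)) : Prop :=
  (∀ I ∈ S, 0 ≤ I.1 ∧ I.1 ≤ I.2 ∧ I.2 ≤ m) ∧
  ∀ i : ℤ, 0 ≤ i → i ≤ m →
    (S.filter fun I => I.1 ≤ i ∧ i ≤ I.2).card = σ i

/-- The *graph* of a system of intervals in `[0,m]` enumerated (with multiplicity) by
`f : Fin t → ℤ × ℤ` : its vertices are the `t` intervals (`Sum.inl j` is the `j`-th interval)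
together with `m` additional vertices `w_0, …, w_{m-1}` (`Sum.inr i` is `w_i`), and `w_i` is
adjacent exactly to the intervals whose right endpoint is `i` and to the intervals whose
left endpoint is `i + 1`. -/
def systemGraph (m : ℕ) {t : ℕ} (f : Fin t → ℤ × ℤ) : SimpleGraph (Fin t ⊕ Fin m) :=
  SimpleGraph.fromRel fun u v =>
    match u, v with
    | Sum.inl j, Sum.inr i => (f j).2 = (i : ℤ) ∨ (f j).1 = (i : ℤ) + 1
    | _, _ => False

/-- A multiset of intervals in `[0,m]` is *admissible* if its graph is a tree.  (The graph is
independent, up to isomorphism, of the chosen enumeration of the multiset.) -/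
def IsAdmissible (m : ℕ) (S : Multiset (ℤ × ℤ)) : Prop :=
  ∃ (t : ℕ) (f : Fin t → ℤ × ℤ), (List.ofFn f : Multiset (ℤ × ℤ)) = S ∧
    (systemGraph m f).IsTree

/-- `IsMarkedSystem m σ t M` : `M` is a *marked admissible proper system* with parameters
`(m, σ)` consisting of exactly `t` intervals: a finite multiset of pairs `(I, p)` where `p`
is an integer point of the interval `I`, whose multiset of first components is an admissible
proper system with parameters `(m, σ)` consisting of `t` intervals. -/
def IsMarkedSystem (m : ℕ) (σ : ℤ → ℕ) (t : ℕ) (M : Multiset ((ℤ × ℤ) × ℤ)) : Prop :=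
  (∀ p ∈ M, p.1.1 ≤ p.2 ∧ p.2 ≤ p.1.2) ∧
  IsProperSystem m σ (M.map Prod.fst) ∧
  IsAdmissible m (M.map Prod.fst) ∧
  M.card = t

open SimpleGraph in
theorem tree_of_parent {V : Type} [DecidableEq V] (G : SimpleGraph V) (r : V) (par : V → V)
    (μ : V → ℕ)
    (hpr : par r = r)
    (hadj : ∀ v, v ≠ r → G.Adj v (par v))
    (hmu : ∀ v, v ≠ r → μ (par v) < μ v)
    (hedge : ∀ ⦃a b⦄, G.Adj a b → par a = b ∨ par b = a) : G.IsTree := by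
  have key : ∀ N v, μ v < N → G.Reachable v r := by
    intro N
    induction N with
    | zero => exact fun v hv => absurd hv (Nat.not_lt_zero _)
    | succ N ih =>
      intro v hv
      rcases eq_or_ne v r with rfl | hvr
      · exact Reachable.refl _
      · exact ((hadj v hvr).reachable).trans (ih (par v) (by have := hmu v hvr; omega))
  have hreach : ∀ v, G.Reachable v r := fun v => key (μ v + 1) v (by omega)
  constructor
  · rw [connected_iff]
    exact ⟨fun a b => (hreach a).trans (hreach b).symm, ⟨r⟩⟩
  · intro v c hc
    obtain ⟨u, hu, hmax⟩ := (c.support.toFinset).exists_max_image μ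
      ⟨v, by simp [Walk.start_mem_support]⟩
    rw [List.mem_toFinset] at hu
    have hmax' : ∀ x ∈ c.support, μ x ≤ μ u := fun x hx => hmax x (List.mem_toFinset.2 hx)
    obtain ⟨c', hc', hsup⟩ : ∃ c' : G.Walk u u, c'.IsCycle ∧ ∀ x ∈ c'.support, μ x ≤ μ u := by
      refine ⟨c.rotate u hu, hc.rotate hu, ?_⟩
      intro x hx
      rcases List.mem_cons.1 ((c.rotate u hu).support_eq_cons ▸ hx) with rfl | hx'
      · exact le_refl _
      · exact hmax' x (List.mem_of_mem_tail (((Walk.support_rotate c u hu).mem_iff).1 hx'))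
    have hparmax : ∀ b, G.Adj u b → b ∈ c'.support → par u = b := by
      intro b hub hbs
      rcases hedge hub with h | h
      · exact h
      · exfalso
        have hbr : b ≠ r := by
          rintro rfl
          exact hub.ne (by rw [← h]; exact hpr)
        have := hmu b hbr
        rw [h] at this
        exact absurd (hsup b hbs) (by omega)
    have hlen : 3 ≤ c'.length := hc'.three_le_length
    have hnn : ¬ c'.Nil := hc'.not_nil
    obtain ⟨b, hub, q, rfl⟩ := Walk.not_nil_iff.mp hnn
    have hb : par u = b := hparmax b hub (by
      rw [Walk.support_cons]
      exact List.mem_cons_of_mem _ q.start_mem_support)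
    have hnn2 : ¬ (Walk.cons hub q).reverse.Nil := by
      rw [Walk.nil_iff_length_eq, Walk.length_reverse, Walk.length_cons]
      rw [Walk.length_cons] at hlen
      omega
    obtain ⟨b2, hub2, q2, hq2⟩ := Walk.not_nil_iff.mp hnn2
    have hb2s : b2 ∈ (Walk.cons hub q).support := by
      have : b2 ∈ (Walk.cons hub q).reverse.support := by
        rw [hq2, Walk.support_cons]
        exact List.mem_cons_of_mem _ q2.start_mem_support
      rwa [Walk.support_reverse, List.mem_reverse] at this
    have hb2 : par u = b2 := hparmax b2 hub2 hb2s
    have hbb : b2 = b := by rw [← hb, ← hb2]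
    subst hbb
    -- so the first edge equals the last edge
    have hrev : (s(u, b2) :: q.edges).reverse = s(u, b2) :: q2.edges := by
      rw [← Walk.edges_cons hub q, ← Walk.edges_reverse, hq2, Walk.edges_cons]
    have hql : q.edges.length = q.length := Walk.length_edges q
    have hqne : q.edges ≠ [] := by
      intro hcon
      rw [hcon] at hql
      rw [Walk.length_cons] at hlen
      simp at hql
      omega
    have happ : q.edges.reverse ++ [s(u, b2)] = s(u, b2) :: q2.edges := by
      rw [← hrev, List.reverse_cons]
    have hmem : s(u, b2) ∈ q.edges := by
      rcases hl : q.edges.reverse with _ | ⟨a, t⟩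
      · exact absurd (by simpa using congrArg List.reverse hl) hqne
      · rw [hl] at happ
        simp only [List.cons_append, List.cons.injEq] at happ
        have : a ∈ q.edges.reverse := by rw [hl]; exact List.mem_cons_self
        rw [happ.1] at this
        exact List.mem_reverse.1 this
    have hnodup : ((Walk.cons hub q).edges).Nodup := hc'.edges_nodup
    rw [Walk.edges_cons] at hnodup
    exact (List.nodup_cons.1 hnodup).1 hmem

-- counting helpers
section helpers
variable {α β γ : Type*}

lemma card_filter_ofFn {N : ℕ} (g : Fin N → α) (p : α → Prop) [DecidablePred p] :
    (Multiset.filter p ((List.ofFn g : List α) : Multiset α)).card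
      = (Finset.univ.filter fun i => p (g i)).card := by
  have h1 : ((List.ofFn g : List α) : Multiset α) = Multiset.map g Finset.univ.val := by
    rw [List.ofFn_eq_map]
    rfl
  rw [h1, Multiset.filter_map, Multiset.card_map]
  rfl

lemma card_filter_equiv [Fintype β] [Fintype γ] (e : β ≃ γ) (p : γ → Prop) [DecidablePred p] :
    (Finset.univ.filter fun b => p (e b)).card = (Finset.univ.filter p).card := by
  refine Finset.card_bij (fun b _ => e b) ?_ ?_ ?_
  · intro b hb
    simp only [Finset.mem_filter, Finset.mem_univ, true_and] at hb ⊢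
    exact hb
  · intro b1 _ b2 _ hb
    exact e.injective hb
  · intro c hc
    simp only [Finset.mem_filter, Finset.mem_univ, true_and] at hc
    exact ⟨e.symm c, by simp [hc], by simp⟩

lemma card_filter_sum [Fintype α] [Fintype β] (p : α ⊕ β → Prop) [DecidablePred p] :
    (Finset.univ.filter p).card
      = (Finset.univ.filter fun a => p (Sum.inl a)).card
        + (Finset.univ.filter fun b => p (Sum.inr b)).card := by
  rw [Finset.card_filter, Finset.card_filter, Finset.card_filter, Fintype.sum_sum_type]

lemma card_filter_fin (N : ℕ) (Q : ℕ → Prop) [DecidablePred Q] :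
    (Finset.univ.filter fun v : Fin N => Q v.val).card
      = ∑ i ∈ Finset.range N, if Q i then 1 else 0 := by
  rw [Finset.card_filter]
  exact Fin.sum_univ_eq_sum_range (fun i => if Q i then 1 else 0) N

lemma count_lt (N a : ℕ) : (∑ i ∈ Finset.range N, if i < a then 1 else 0) = min a N := by
  induction N with
  | zero => simp
  | succ N ih => rw [Finset.sum_range_succ, ih]; split <;> omega

lemma count_le (N c : ℕ) : (∑ i ∈ Finset.range N, if c ≤ i then 1 else 0) = N - c := by
  induction N with
  | zero => simp
  | succ N ih => rw [Finset.sum_range_succ, ih]; split <;> omega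


namespace S1

/-- index of the top dyadic block -/
def KK (h : ℕ) : ℕ := Nat.log 2 h

/-- size of the `k`-th dyadic block of `{1, …, h-1}` -/
def bsz (h k : ℕ) : ℕ := min (2 ^ (k + 1)) h - 2 ^ k

/-- the structural index: a permutation (for `β`) and blockwise permutations (for `par`). -/
abbrev Idx (h : ℕ) := Equiv.Perm (Fin h) × (∀ k : Fin (KK h + 1), Equiv.Perm (Fin (bsz h k)))

/-- value of the `k`-th block permutation at `i`, as a total function. -/
def gv (h : ℕ) (x : Idx h) (k i : ℕ) : ℕ :=
  if hk : k < KK h + 1 then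
    if hi : i < bsz h k then (x.2 ⟨k, hk⟩ ⟨i, hi⟩).val else 0
  else 0

/-- the (1-based) blockwise-permuted value of `j ∈ {1, …, h-1}`. -/
def wN (h : ℕ) (x : Idx h) (j : ℕ) : ℕ :=
  2 ^ Nat.log 2 j + gv h x (Nat.log 2 j) (j - 2 ^ Nat.log 2 j)

/-- offset of the target of the edge out of right-vertex `h + v` (0 for `v = 0`). -/
def pvN (h : ℕ) (x : Idx h) (v : ℕ) : ℕ := if v = 0 then 0 else wN h x v / 2

lemma pvN_zero {h : ℕ} (x : Idx h) : pvN h x 0 = 0 := if_pos rfl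

lemma pvN_succ {h : ℕ} (x : Idx h) {v : ℕ} : pvN h x (v + 1) = wN h x (v + 1) / 2 :=
  if_neg (Nat.succ_ne_zero v)

lemma log_lt_KK {h j : ℕ} (h2 : j ≤ h) : Nat.log 2 j < KK h + 1 :=
  Nat.lt_succ_of_le (Nat.log_mono_right h2)

lemma pow_log_le {j : ℕ} (h1 : 1 ≤ j) : 2 ^ Nat.log 2 j ≤ j :=
  Nat.pow_log_le_self 2 (by omega)

lemma lt_pow_log_succ (j : ℕ) : j < 2 ^ (Nat.log 2 j + 1) :=
  Nat.lt_pow_succ_log_self (by omega) j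

lemma sub_lt_bsz {h j : ℕ} (h1 : 1 ≤ j) (h2 : j < h) :
    j - 2 ^ Nat.log 2 j < bsz h (Nat.log 2 j) := by
  have ha := pow_log_le h1
  have hb := lt_pow_log_succ j
  have : bsz h (Nat.log 2 j) = min (2 ^ (Nat.log 2 j + 1)) h - 2 ^ Nat.log 2 j := rfl
  omega

lemma gv_lt {h : ℕ} (x : Idx h) {k i : ℕ} (hk : k < KK h + 1) (hi : i < bsz h k) :
    gv h x k i < bsz h k := by
  rw [gv, dif_pos hk, dif_pos hi]
  exact (x.2 ⟨k, hk⟩ ⟨i, hi⟩).isLt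

lemma wN_lt {h j : ℕ} (x : Idx h) (h1 : 1 ≤ j) (h2 : j < h) :
    wN h x j < min (2 ^ (Nat.log 2 j + 1)) h := by
  have hg := gv_lt x (log_lt_KK (le_of_lt h2)) (sub_lt_bsz h1 h2)
  have ha := pow_log_le h1
  have hb := lt_pow_log_succ j
  have : bsz h (Nat.log 2 j) = min (2 ^ (Nat.log 2 j + 1)) h - 2 ^ Nat.log 2 j := rfl
  rw [wN]
  omega

lemma wN_ge {h j : ℕ} (x : Idx h) : 2 ^ Nat.log 2 j ≤ wN h x j := Nat.le_add_right _ _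

lemma wN_pos {h j : ℕ} (x : Idx h) : 1 ≤ wN h x j :=
  le_trans (Nat.one_le_two_pow) (wN_ge x)

lemma log_wN {h j : ℕ} (x : Idx h) (h1 : 1 ≤ j) (h2 : j < h) :
    Nat.log 2 (wN h x j) = Nat.log 2 j := by
  refine Nat.log_eq_of_pow_le_of_lt_pow (wN_ge x) ?_
  have := wN_lt x h1 h2
  omega

lemma wd_lt_pow {h j : ℕ} (x : Idx h) (h1 : 1 ≤ j) (h2 : j < h) :
    wN h x j / 2 < 2 ^ Nat.log 2 j := by
  have := wN_lt x h1 h2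
  have h2' : wN h x j < 2 ^ Nat.log 2 j * 2 := by
    rw [pow_succ] at this; omega
  omega

lemma wd_lt {h j : ℕ} (x : Idx h) (h1 : 1 ≤ j) (h2 : j < h) : wN h x j / 2 < j :=
  lt_of_lt_of_le (wd_lt_pow x h1 h2) (pow_log_le h1)

lemma pvN_lt {h v : ℕ} (x : Idx h) (hh : 0 < h) (hv : v < h) : pvN h x v < h := by
  rw [pvN]
  split
  · exact hh
  · exact lt_trans (wd_lt x (by omega) hv) hv

lemma wN_inj {h : ℕ} (x : Idx h) {a b : ℕ} (ha1 : 1 ≤ a) (ha2 : a < h)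
    (hb1 : 1 ≤ b) (hb2 : b < h) (hw : wN h x a = wN h x b) : a = b := by
  have hk : Nat.log 2 a = Nat.log 2 b := by
    rw [← log_wN x ha1 ha2, ← log_wN x hb1 hb2, hw]
  rw [wN, wN, hk] at hw
  have hg : gv h x (Nat.log 2 b) (a - 2 ^ Nat.log 2 b) =
      gv h x (Nat.log 2 b) (b - 2 ^ Nat.log 2 b) := by omega
  have hka : Nat.log 2 b < KK h + 1 := log_lt_KK (le_of_lt hb2)
  have hia : a - 2 ^ Nat.log 2 b < bsz h (Nat.log 2 b) := hk ▸ sub_lt_bsz ha1 ha2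
  have hib : b - 2 ^ Nat.log 2 b < bsz h (Nat.log 2 b) := sub_lt_bsz hb1 hb2
  simp only [gv, dif_pos hka, dif_pos hia, dif_pos hib] at hg
  have := (x.2 ⟨Nat.log 2 b, hka⟩).injective (Fin.ext hg)
  have h2a : 2 ^ Nat.log 2 b ≤ a := hk ▸ pow_log_le ha1
  have h2b : 2 ^ Nat.log 2 b ≤ b := pow_log_le hb1
  have := Fin.mk.injEq _ hia _ hib ▸ this
  omega

/-- the interval associated to each index (left edges and right edges). -/
def FI (h : ℕ) (x : Idx h) : Fin h ⊕ Fin (h - 1) → ℤ × ℤ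
  | .inl u => (((u.val + 1 : ℕ) : ℤ), ((h + pvN h x (x.1 u).val : ℕ) : ℤ))
  | .inr j => (((h + wN h x (j.val + 1) / 2 + 1 : ℕ) : ℤ), ((h + j.val + 1 : ℕ) : ℤ))

/-- number of possible marks on each interval. -/
def lenL (h : ℕ) (x : Idx h) (u : Fin h) : ℕ := h + pvN h x (x.1 u).val - u.val
def lenR (h : ℕ) (x : Idx h) (j : Fin (h - 1)) : ℕ := (j.val + 1) - wN h x (j.val + 1) / 2

lemma lenL_pos {h : ℕ} (x : Idx h) (u : Fin h) : 0 < lenL h x u := by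
  have := u.isLt; rw [lenL]; omega

lemma lenL_ge {h : ℕ} (x : Idx h) (u : Fin h) : h - u.val ≤ lenL h x u := by
  rw [lenL]; omega

lemma lenR_ge {h : ℕ} (x : Idx h) (j : Fin (h - 1)) :
    (j.val + 1) - 2 ^ Nat.log 2 (j.val + 1) + 1 ≤ lenR h x j := by
  have hj : j.val + 1 < h := by have := j.isLt; omega
  have := wd_lt_pow x (by omega) hj
  have := pow_log_le (j := j.val + 1) (by omega)
  rw [lenR]; omega

lemma lenR_pos {h : ℕ} (x : Idx h) (j : Fin (h - 1)) : 0 < lenR h x j :=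
  lt_of_lt_of_le (by omega) (lenR_ge x j)

/-- marks -/
abbrev Marks (h : ℕ) (x : Idx h) :=
  (∀ u : Fin h, Fin (lenL h x u)) × (∀ j : Fin (h - 1), Fin (lenR h x j))

abbrev XX (h : ℕ) := Σ x : Idx h, Marks h x

/-- the marked interval system of an index -/
def Fm (h : ℕ) (p : XX h) : Fin h ⊕ Fin (h - 1) → (ℤ × ℤ) × ℤ
  | .inl u => (FI h p.1 (.inl u), ((u.val + 1 + (p.2.1 u).val : ℕ) : ℤ))
  | .inr j => (FI h p.1 (.inr j), ((h + wN h p.1 (j.val + 1) / 2 + 1 + (p.2.2 j).val : ℕ) : ℤ))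

def Φ (h : ℕ) (p : XX h) : Multiset ((ℤ × ℤ) × ℤ) :=
  ((List.ofFn (fun i : Fin (h + (h - 1)) => Fm h p (finSumFinEquiv.symm i)) : List _) : Multiset _)

lemma mem_Φ {h : ℕ} {p : XX h} {a : (ℤ × ℤ) × ℤ} :
    a ∈ Φ h p ↔ ∃ s, Fm h p s = a := by
  rw [Φ, Multiset.mem_coe, List.mem_ofFn]
  constructor
  · rintro ⟨i, hi⟩; exact ⟨_, hi⟩
  · rintro ⟨s, hs⟩; exact ⟨finSumFinEquiv s, by simpa using hs⟩

lemma card_Φ {h : ℕ} (p : XX h) : Multiset.card (Φ h p) = h + (h - 1) := by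
  rw [Φ, Multiset.coe_card, List.length_ofFn]


variable {h : ℕ}

lemma map_fst_Φ (p : XX h) :
    (Φ h p).map Prod.fst
      = ((List.ofFn fun i : Fin (h + (h - 1)) => FI h p.1 (finSumFinEquiv.symm i) : List _) :
          Multiset _) := by
  have hfst : ∀ s, (Fm h p s).1 = FI h p.1 s := by rintro (u | j) <;> rfl
  rw [Φ, Multiset.map_coe, List.map_ofFn]
  exact congrArg _ (congrArg List.ofFn (funext fun i => hfst (finSumFinEquiv.symm i)))

lemma count_Φ (hh : 0 < h) (p : XX h) (i : ℤ) (h0 : 0 ≤ i) (h1 : i ≤ (2 * h : ℕ)) :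
    (Multiset.filter (fun I => I.1 ≤ i ∧ i ≤ I.2) ((Φ h p).map Prod.fst)).card
      = (min i (2 * (h : ℤ) - i)).toNat := by
  obtain ⟨a, rfl⟩ : ∃ a : ℕ, i = (a : ℤ) := ⟨i.toNat, (Int.toNat_of_nonneg h0).symm⟩
  have ha2 : a ≤ 2 * h := by exact_mod_cast h1
  set x := p.1 with hx
  rw [map_fst_Φ, card_filter_ofFn, card_filter_equiv finSumFinEquiv.symm
    (fun s => (FI h x s).1 ≤ (a : ℤ) ∧ (a : ℤ) ≤ (FI h x s).2), card_filter_sum]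
  have hgoal : (min (a : ℤ) (2 * (h : ℤ) - a)).toNat = min a (2 * h - a) := by omega
  rw [hgoal]
  -- rewrite the two conditions in ℕ terms
  have hL : ∀ u : Fin h,
      ((FI h x (.inl u)).1 ≤ (a : ℤ) ∧ (a : ℤ) ≤ (FI h x (.inl u)).2)
        ↔ (u.val + 1 ≤ a ∧ a ≤ h + pvN h x (x.1 u).val) := by
    intro u
    dsimp only [FI]
    constructor
    · rintro ⟨c1, c2⟩; exact ⟨by exact_mod_cast c1, by exact_mod_cast c2⟩
    · rintro ⟨c1, c2⟩; exact ⟨by exact_mod_cast c1, by exact_mod_cast c2⟩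
  have hR : ∀ j : Fin (h - 1),
      ((FI h x (.inr j)).1 ≤ (a : ℤ) ∧ (a : ℤ) ≤ (FI h x (.inr j)).2)
        ↔ (h + wN h x (j.val + 1) / 2 + 1 ≤ a ∧ a ≤ h + j.val + 1) := by
    intro j
    dsimp only [FI]
    constructor
    · rintro ⟨c1, c2⟩; exact ⟨by exact_mod_cast c1, by exact_mod_cast c2⟩
    · rintro ⟨c1, c2⟩; exact ⟨by exact_mod_cast c1, by exact_mod_cast c2⟩
  rw [Finset.filter_congr (fun u _ => hL u), Finset.filter_congr (fun j _ => hR j)]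
  rcases le_or_gt a h with hah | hah
  · -- left part counts a, right part counts 0
    have h2 : (Finset.univ.filter fun u : Fin h =>
        (u.val + 1 ≤ a ∧ a ≤ h + pvN h x (x.1 u).val)).card = a := by
      have : ∀ u : Fin h, (u.val + 1 ≤ a ∧ a ≤ h + pvN h x (x.1 u).val) ↔ u.val < a := by
        intro u; constructor
        · rintro ⟨c1, _⟩; omega
        · intro c; exact ⟨by omega, by omega⟩
      rw [Finset.filter_congr (fun u _ => this u), card_filter_fin h (· < a), count_lt]
      omega
    have h3 : (Finset.univ.filter fun j : Fin (h - 1) =>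
        (h + wN h x (j.val + 1) / 2 + 1 ≤ a ∧ a ≤ h + j.val + 1)).card = 0 := by
      rw [Finset.card_eq_zero, Finset.filter_eq_empty_iff]
      intro j _
      omega
    rw [h2, h3]
    omega
  · -- a > h
    have h2 : (Finset.univ.filter fun u : Fin h =>
        (u.val + 1 ≤ a ∧ a ≤ h + pvN h x (x.1 u).val)).card
          = ∑ jj ∈ Finset.range h, if a ≤ h + pvN h x jj then 1 else 0 := by
      have : ∀ u : Fin h, (u.val + 1 ≤ a ∧ a ≤ h + pvN h x (x.1 u).val)
          ↔ a ≤ h + pvN h x (x.1 u).val := by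
        intro u
        have := u.isLt
        constructor
        · rintro ⟨_, c2⟩; exact c2
        · intro c; exact ⟨by omega, c⟩
      rw [Finset.filter_congr (fun u _ => this u),
        card_filter_equiv x.1 (fun v : Fin h => a ≤ h + pvN h x v.val),
        card_filter_fin h (fun v => a ≤ h + pvN h x v)]
    have h3 : (Finset.univ.filter fun j : Fin (h - 1) =>
        (h + wN h x (j.val + 1) / 2 + 1 ≤ a ∧ a ≤ h + j.val + 1)).card
          = ∑ jj ∈ Finset.range (h - 1),
              if (h + wN h x (jj + 1) / 2 + 1 ≤ a ∧ a ≤ h + jj + 1) then 1 else 0 :=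
      card_filter_fin (h - 1) (fun jj => (h + wN h x (jj + 1) / 2 + 1 ≤ a ∧ a ≤ h + jj + 1))
    rw [h2, h3]
    have hsplit : Finset.range h = Finset.range ((h - 1) + 1) := by
      congr 1; omega
    rw [hsplit, Finset.sum_range_succ']
    have hz : (if a ≤ h + pvN h x 0 then 1 else 0) = 0 := by
      rw [pvN_zero, Nat.add_zero, if_neg (by omega)]
    rw [hz, Nat.add_zero, ← Finset.sum_add_distrib]
    have hpt : ∀ jj ∈ Finset.range (h - 1),
        ((if a ≤ h + pvN h x (jj + 1) then 1 else 0)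
          + if (h + wN h x (jj + 1) / 2 + 1 ≤ a ∧ a ≤ h + jj + 1) then 1 else 0)
          = if a - h - 1 ≤ jj then 1 else 0 := by
      intro jj hjj
      rw [Finset.mem_range] at hjj
      have hW : wN h x (jj + 1) / 2 < jj + 1 := wd_lt x (by omega) (by omega)
      rw [pvN_succ]
      split_ifs <;> omega
    rw [Finset.sum_congr rfl hpt, count_le]
    omega

def parV (h : ℕ) (hh : 0 < h) (x : Idx h) :
    (Fin (h + (h - 1)) ⊕ Fin (2 * h)) → (Fin (h + (h - 1)) ⊕ Fin (2 * h)) := fun vtx =>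
  match vtx with
  | .inl e =>
    match finSumFinEquiv.symm e with
    | .inl u => .inr ⟨h + pvN h x (x.1 u).val, by have := pvN_lt x hh (x.1 u).isLt; omega⟩
    | .inr j => .inr ⟨h + wN h x (j.val + 1) / 2, by
        have hj : j.val + 1 < h := by have := j.isLt; omega
        have := wd_lt x (by omega) hj; omega⟩
  | .inr z =>
    if hz : z.val < h then .inl (finSumFinEquiv (.inl ⟨z.val, hz⟩))
    else if hz2 : h < z.val then
      .inl (finSumFinEquiv (.inr ⟨z.val - h - 1, by have := z.isLt; omega⟩))
    else vtx

def meaV (h : ℕ) : (Fin (h + (h - 1)) ⊕ Fin (2 * h)) → ℕ := fun vtx =>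
  match vtx with
  | .inl e =>
    match finSumFinEquiv.symm e with
    | .inl _ => 2 * h + 1
    | .inr j => 2 * j.val + 1
  | .inr z => if z.val < h then 2 * h + 2 else 2 * (z.val - h)

lemma isTree_sys (hh : 0 < h) (x : Idx h) :
    (systemGraph (2 * h) (fun i : Fin (h + (h - 1)) => FI h x (finSumFinEquiv.symm i))).IsTree := by
  set f : Fin (h + (h - 1)) → ℤ × ℤ := fun i => FI h x (finSumFinEquiv.symm i) with hf
  apply tree_of_parent _ (Sum.inr ⟨h, by omega⟩) (parV h hh x) (meaV h)
  · show parV h hh x (Sum.inr ⟨h, _⟩) = _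
    rw [parV]
    simp
  · -- hadj
    intro v hv
    rw [systemGraph, SimpleGraph.fromRel_adj]
    rcases v with e | z
    · rcases hs : finSumFinEquiv.symm e with u | j
      · rw [parV]
        simp only [hs]
        refine ⟨by simp, Or.inl ?_⟩
        show (f e).2 = _ ∨ (f e).1 = _
        left
        rw [hf]
        simp only [hs, FI]
      · rw [parV]
        simp only [hs]
        refine ⟨by simp, Or.inl ?_⟩
        show (f e).2 = _ ∨ (f e).1 = _
        right
        rw [hf]
        simp only [hs, FI]
        push_cast
        ring
    · rw [parV]
      rcases lt_trichotomy z.val h with hz | hz | hz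
      · rw [dif_pos hz]
        refine ⟨by simp, Or.inr ?_⟩
        show (f _).2 = _ ∨ (f _).1 = _
        right
        rw [hf]
        simp only [Equiv.symm_apply_apply, FI]
        push_cast
        ring
      · exact absurd (congrArg Sum.inr (Fin.ext hz)) hv
      · rw [dif_neg (by omega), dif_pos hz]
        refine ⟨by simp, Or.inr ?_⟩
        show (f _).2 = _ ∨ (f _).1 = _
        left
        rw [hf]
        simp only [Equiv.symm_apply_apply, FI]
        congr 1
        have := z.isLt
        omega
  · -- hmu
    intro v hv
    rcases v with e | z
    · rcases hs : finSumFinEquiv.symm e with u | j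
      · rw [parV, meaV]
        simp only [hs, meaV]
        rw [if_neg (by omega)]
        have := pvN_lt x hh (x.1 u).isLt
        omega
      · rw [parV, meaV]
        simp only [hs, meaV]
        rw [if_neg (by omega)]
        have hj : j.val + 1 < h := by have := j.isLt; omega
        have := wd_lt x (by omega) hj
        omega
    · rw [parV]
      rcases lt_trichotomy z.val h with hz | hz | hz
      · rw [dif_pos hz, meaV, meaV]
        simp only [Equiv.symm_apply_apply]
        rw [if_pos hz]
        omega
      · exact absurd (by exact congrArg Sum.inr (Fin.ext hz) : Sum.inr z = _) hv
      · rw [dif_neg (by omega), dif_pos hz, meaV, meaV]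
        simp only [Equiv.symm_apply_apply]
        rw [if_neg (by omega)]
        omega
  · -- hedge
    intro a b hab
    rw [systemGraph, SimpleGraph.fromRel_adj] at hab
    obtain ⟨hne, hr⟩ := hab
    have main : ∀ (e : Fin (h + (h - 1))) (i : Fin (2 * h)),
        ((f e).2 = (i.val : ℤ) ∨ (f e).1 = (i.val : ℤ) + 1) →
        parV h hh x (Sum.inl e) = Sum.inr i ∨ parV h hh x (Sum.inr i) = Sum.inl e := by
      intro e i hrel
      rcases hs : finSumFinEquiv.symm e with u | j
      · rw [hf] at hrel
        simp only [hs, FI] at hrel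
        rcases hrel with hr1 | hr1
        · left
          rw [parV]
          simp only [hs]
          have : i.val = h + pvN h x (x.1 u).val := by exact_mod_cast hr1.symm
          exact congrArg Sum.inr (Fin.ext this.symm)
        · right
          have hiv : i.val = u.val := by
            have h2 : ((u.val + 1 : ℕ) : ℤ) = ((i.val + 1 : ℕ) : ℤ) := by push_cast; omega
            have h3 : u.val + 1 = i.val + 1 := by exact_mod_cast h2
            omega
          rw [parV]
          rw [dif_pos (by rw [hiv]; exact u.isLt)]
          have : (⟨i.val, by rw [hiv]; exact u.isLt⟩ : Fin h) = u := Fin.ext hiv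
          rw [this, ← hs, Equiv.apply_symm_apply]
      · rw [hf] at hrel
        simp only [hs, FI] at hrel
        rcases hrel with hr1 | hr1
        · right
          have hiv : i.val = h + j.val + 1 := by exact_mod_cast hr1.symm
          have hj := j.isLt
          have hlt : i.val - h - 1 < h - 1 := by have := i.isLt; omega
          rw [parV]
          rw [dif_neg (by omega), dif_pos (by omega)]
          have heq : (⟨i.val - h - 1, hlt⟩ : Fin (h - 1)) = j :=
            Fin.ext (by show i.val - h - 1 = j.val; omega)
          rw [heq, ← hs, Equiv.apply_symm_apply]
        · left
          have hiv : i.val = h + wN h x (j.val + 1) / 2 := by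
            have : ((h + wN h x (j.val + 1) / 2 + 1 : ℕ) : ℤ) = ((i.val + 1 : ℕ) : ℤ) := by
              push_cast; omega
            have := (by exact_mod_cast this : h + wN h x (j.val + 1) / 2 + 1 = i.val + 1)
            omega
          rw [parV]
          simp only [hs]
          exact congrArg Sum.inr (Fin.ext hiv.symm)
    rcases a with e | z <;> rcases b with e2 | z2
    · exact absurd hr (by rintro (hc | hc) <;> exact hc)
    · exact main e z2 (hr.elim id (fun hc => hc.elim))
    · exact (main e2 z (hr.elim (fun hc => hc.elim) id)).symm
    · exact absurd hr (by rintro (hc | hc) <;> exact hc)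

lemma main_mem (hh : 0 < h) (p : XX h) :
    IsMarkedSystem (2 * h) (fun i : ℤ => (min i (2 * (h : ℤ) - i)).toNat) (h + (h - 1))
      (Φ h p) := by
  refine ⟨?_, ⟨?_, ?_⟩, ⟨h + (h - 1), fun i => FI h p.1 (finSumFinEquiv.symm i),
    (map_fst_Φ p).symm, isTree_sys hh p.1⟩, card_Φ p⟩
  · -- marks lie in the intervals
    intro pe hpe
    rw [mem_Φ] at hpe
    obtain ⟨s, rfl⟩ := hpe
    rcases s with u | j
    · have hm : (p.2.1 u).val < h + pvN h p.1 (p.1.1 u).val - u.val := (p.2.1 u).isLt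
      have hu := u.isLt
      dsimp only [Fm, FI]
      exact ⟨Nat.cast_le.mpr (by omega), Nat.cast_le.mpr (by omega)⟩
    · have hm : (p.2.2 j).val < (j.val + 1) - wN h p.1 (j.val + 1) / 2 := (p.2.2 j).isLt
      dsimp only [Fm, FI]
      exact ⟨Nat.cast_le.mpr (by omega), Nat.cast_le.mpr (by omega)⟩
  · -- interval bounds
    intro I hI
    rw [map_fst_Φ, Multiset.mem_coe, List.mem_ofFn] at hI
    obtain ⟨i, rfl⟩ := hI
    rcases hs : finSumFinEquiv.symm i with u | j
    · have hu := u.isLt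
      have hpv := pvN_lt p.1 hh (p.1.1 u).isLt
      dsimp only [FI]
      refine ⟨by positivity, Nat.cast_le.mpr (by omega), ?_⟩
      show _ ≤ ((2 * h : ℕ) : ℤ)
      exact Nat.cast_le.mpr (by omega)
    · have hj : j.val + 1 < h := by have := j.isLt; omega
      have hw := wd_lt p.1 (by omega) hj
      dsimp only [FI]
      refine ⟨by positivity, Nat.cast_le.mpr (by omega), ?_⟩
      show _ ≤ ((2 * h : ℕ) : ℤ)
      exact Nat.cast_le.mpr (by omega)
  · -- counting
    intro i h0 h1
    exact count_Φ hh p i h0 h1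

lemma recon {p q : XX h} (hpq : Φ h p = Φ h q) :
    (∀ j : Fin (h - 1), wN h q.1 (j.val + 1) / 2 = wN h p.1 (j.val + 1) / 2) ∧
    (∀ u : Fin h, pvN h q.1 (q.1.1 u).val = pvN h p.1 (p.1.1 u).val) := by
  constructor
  · intro j
    have hm : Fm h p (.inr j) ∈ Φ h q := hpq ▸ mem_Φ.mpr ⟨.inr j, rfl⟩
    rw [mem_Φ] at hm
    obtain ⟨s, hs⟩ := hm
    rcases s with u | j2
    · exfalso
      have h1 := congrArg (fun z => z.1.1) hs
      dsimp only [Fm, FI] at h1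
      have h1' : u.val + 1 = h + wN h p.1 (j.val + 1) / 2 + 1 := by exact_mod_cast h1
      have := u.isLt
      omega
    · have h1 := congrArg (fun z => z.1.1) hs
      have h2 := congrArg (fun z => z.1.2) hs
      dsimp only [Fm, FI] at h1 h2
      have h2' : h + j2.val + 1 = h + j.val + 1 := by exact_mod_cast h2
      have hj : j2 = j := Fin.ext (by omega)
      subst hj
      have h1' : h + wN h q.1 (j2.val + 1) / 2 + 1 = h + wN h p.1 (j2.val + 1) / 2 + 1 := by
        exact_mod_cast h1
      omega
  · intro u
    have hm : Fm h p (.inl u) ∈ Φ h q := hpq ▸ mem_Φ.mpr ⟨.inl u, rfl⟩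
    rw [mem_Φ] at hm
    obtain ⟨s, hs⟩ := hm
    rcases s with u2 | j2
    · have h1 := congrArg (fun z => z.1.1) hs
      have h2 := congrArg (fun z => z.1.2) hs
      dsimp only [Fm, FI] at h1 h2
      have h1' : u2.val + 1 = u.val + 1 := by exact_mod_cast h1
      have hu : u2 = u := Fin.ext (by omega)
      subst hu
      have h2' : h + pvN h q.1 (q.1.1 u2).val = h + pvN h p.1 (p.1.1 u2).val := by
        exact_mod_cast h2
      omega
    · exfalso
      have h1 := congrArg (fun z => z.1.1) hs
      dsimp only [Fm, FI] at h1
      have h1' : h + wN h q.1 (j2.val + 1) / 2 + 1 = u.val + 1 := by exact_mod_cast h1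
      have := u.isLt
      omega

/-- low-entropy encoding of an index, injective on each fiber of `Φ`. -/
def enc (h : ℕ) (p : XX h) : (Fin (h - 1) → Bool) × (Fin h → Bool × Bool) :=
  (fun j => decide ((wN h p.1 (j.val + 1)) % 2 = 1),
   fun u => (decide ((p.1.1 u).val = 0), decide ((wN h p.1 (p.1.1 u).val) % 2 = 1)))

lemma fiber_inj (hh : 0 < h) {p q : XX h} (hpq : Φ h p = Φ h q) (henc : enc h p = enc h q) :
    p = q := by
  obtain ⟨hbot, htgt⟩ := recon hpq
  have hb1 : ∀ j : Fin (h - 1),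
      ((wN h p.1 (j.val + 1)) % 2 = 1) ↔ ((wN h q.1 (j.val + 1)) % 2 = 1) := by
    intro j
    exact decide_eq_decide.mp (congrFun (congrArg Prod.fst henc) j)
  have hw : ∀ j : Fin (h - 1), wN h p.1 (j.val + 1) = wN h q.1 (j.val + 1) := by
    intro j
    have h1 := hbot j
    have h2 := hb1 j
    rcases Nat.mod_two_eq_zero_or_one (wN h p.1 (j.val + 1)) with hp2 | hp2 <;>
      rcases Nat.mod_two_eq_zero_or_one (wN h q.1 (j.val + 1)) with hq2 | hq2 <;> omega
  have hwN : ∀ jj : ℕ, 1 ≤ jj → jj < h → wN h p.1 jj = wN h q.1 jj := by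
    intro jj hj1 hj2
    have := hw ⟨jj - 1, by omega⟩
    simpa [Nat.sub_add_cancel hj1] using this
  have hg : p.1.2 = q.1.2 := by
    funext k
    apply Equiv.ext
    intro iF
    have hiF := iF.isLt
    have hbz : bsz h (k : ℕ) = min (2 ^ ((k : ℕ) + 1)) h - 2 ^ (k : ℕ) := rfl
    set j := 2 ^ (k : ℕ) + iF.val with hjdef
    have hjh : j < h := by omega
    have hj1 : 1 ≤ j := by have : 0 < 2 ^ (k : ℕ) := Nat.pow_pos (by omega); omega
    have hlog : Nat.log 2 j = (k : ℕ) :=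
      Nat.log_eq_of_pow_le_of_lt_pow (by omega) (by rw [pow_succ]; omega)
    have h1 := hwN j hj1 hjh
    rw [wN, wN, hlog] at h1
    have hidx : j - 2 ^ (k : ℕ) = iF.val := by omega
    rw [hidx] at h1
    have h2 : gv h p.1 (k : ℕ) iF.val = gv h q.1 (k : ℕ) iF.val := by omega
    have hkk : (k : ℕ) < KK h + 1 := k.isLt
    simp only [gv, dif_pos hkk, dif_pos iF.isLt] at h2
    exact Fin.ext h2
  have hπ : p.1.1 = q.1.1 := by
    apply Equiv.ext
    intro u
    have hz := congrFun (congrArg Prod.snd henc) u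
    have hz1 : ((p.1.1 u).val = 0) ↔ ((q.1.1 u).val = 0) :=
      decide_eq_decide.mp (congrArg Prod.fst hz)
    have hz2 : ((wN h p.1 (p.1.1 u).val) % 2 = 1) ↔ ((wN h q.1 (q.1.1 u).val) % 2 = 1) :=
      decide_eq_decide.mp (congrArg Prod.snd hz)
    have htu := htgt u
    rcases Nat.eq_zero_or_pos (p.1.1 u).val with hp0 | hp0
    · exact Fin.ext (by rw [hp0, (hz1.mp hp0)])
    · have hq0 : (q.1.1 u).val ≠ 0 := fun hc => by
        have := hz1.mpr hc
        omega
      rw [pvN, if_neg hq0, pvN, if_neg (by omega)] at htu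
      have hvp := (p.1.1 u).isLt
      have hvq := (q.1.1 u).isLt
      have hwNvp : wN h p.1 (p.1.1 u).val = wN h q.1 (p.1.1 u).val :=
        hwN _ (by omega) hvp
      have hmod : wN h p.1 (p.1.1 u).val % 2 = wN h q.1 (q.1.1 u).val % 2 := by
        rcases Nat.mod_two_eq_zero_or_one (wN h p.1 (p.1.1 u).val) with w1 | w1 <;>
          rcases Nat.mod_two_eq_zero_or_one (wN h q.1 (q.1.1 u).val) with w2 | w2 <;>
          simp [w1, w2] at hz2 ⊢
    
      have hfin : wN h q.1 (p.1.1 u).val = wN h q.1 (q.1.1 u).val := by omega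
      exact Fin.ext (wN_inj q.1 (by omega) hvp (by omega) hvq hfin)
  have hx : p.1 = q.1 := Prod.ext hπ hg
  obtain ⟨x, m1, m2⟩ := p
  obtain ⟨y, n1, n2⟩ := q
  dsimp only at hx
  subst hx
  have hm1 : m1 = n1 := by
    funext u
    have hm : Fm h ⟨x, m1, m2⟩ (.inl u) ∈ Φ h ⟨x, n1, n2⟩ := hpq ▸ mem_Φ.mpr ⟨.inl u, rfl⟩
    rw [mem_Φ] at hm
    obtain ⟨s, hs⟩ := hm
    rcases s with u2 | j2
    · have h1 := congrArg (fun z => z.1.1) hs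
      have h2 := congrArg (fun z => z.2) hs
      dsimp only [Fm, FI] at h1 h2
      have h1' : u2.val + 1 = u.val + 1 := by exact_mod_cast h1
      have hu : u2 = u := Fin.ext (by omega)
      subst hu
      have h2' : u2.val + 1 + (n1 u2).val = u2.val + 1 + (m1 u2).val := by exact_mod_cast h2
      exact (Fin.ext (by omega)).symm
    · exfalso
      have h1 := congrArg (fun z => z.1.1) hs
      dsimp only [Fm, FI] at h1
      have h1' : h + wN h x (j2.val + 1) / 2 + 1 = u.val + 1 := by exact_mod_cast h1
      have := u.isLt
      omega
  have hm2 : m2 = n2 := by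
    funext j
    have hm : Fm h ⟨x, m1, m2⟩ (.inr j) ∈ Φ h ⟨x, n1, n2⟩ := hpq ▸ mem_Φ.mpr ⟨.inr j, rfl⟩
    rw [mem_Φ] at hm
    obtain ⟨s, hs⟩ := hm
    rcases s with u2 | j2
    · exfalso
      have h1 := congrArg (fun z => z.1.1) hs
      dsimp only [Fm, FI] at h1
      have h1' : u2.val + 1 = h + wN h x (j.val + 1) / 2 + 1 := by exact_mod_cast h1
      have := u2.isLt
      omega
    · have h1 := congrArg (fun z => z.1.2) hs
      have h2 := congrArg (fun z => z.2) hs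
      dsimp only [Fm, FI] at h1 h2
      have h1' : h + j2.val + 1 = h + j.val + 1 := by exact_mod_cast h1
      have hj : j2 = j := Fin.ext (by omega)
      subst hj
      have h2' : h + wN h x (j2.val + 1) / 2 + 1 + (n2 j2).val
          = h + wN h x (j2.val + 1) / 2 + 1 + (m2 j2).val := by exact_mod_cast h2
      exact (Fin.ext (by omega)).symm
  rw [hm1, hm2]

lemma fiber_card (hh : 0 < h) (M : Multiset ((ℤ × ℤ) × ℤ)) :
    (Finset.univ.filter (fun p : XX h => Φ h p = M)).card ≤ 2 ^ (h - 1) * 4 ^ h := by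
  have hinj : Set.InjOn (enc h) ↑(Finset.univ.filter (fun p : XX h => Φ h p = M)) := by
    intro p hp q hq he
    simp only [Finset.coe_filter, Set.mem_setOf_eq] at hp hq
    exact fiber_inj hh (hp.2.trans hq.2.symm) he
  have h1 := Finset.card_le_card_of_injOn (t := Finset.univ) (enc h)
    (fun a _ => Finset.mem_univ _) hinj
  rw [Finset.card_univ] at h1
  refine le_trans h1 (le_of_eq ?_)
  rw [Fintype.card_prod, Fintype.card_fun, Fintype.card_fun]
  simp [Fintype.card_bool, Fintype.card_fin]

lemma prod_sub_eq_factorial (h : ℕ) : (∏ u : Fin h, (h - u.val)) = h.factorial := by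
  rw [Fin.prod_univ_eq_prod_range (fun i => h - i) h,
    ← Finset.prod_range_add_one_eq_factorial, ← Finset.prod_range_reflect]
  apply Finset.prod_congr rfl
  intro j hj
  rw [Finset.mem_range] at hj
  omega

/-- the lower bound used for the right lengths -/
def lb (j : ℕ) : ℕ := (j + 1) - 2 ^ (Nat.log 2 (j + 1)) + 1

lemma prod_lb_eq (hh : 0 < h) :
    (∏ j : Fin (h - 1), lb j.val) = ∏ k : Fin (KK h + 1), (bsz h (k : ℕ)).factorial := by
  set gfun : Fin (h - 1) → Fin (KK h + 1) :=
    fun j => ⟨Nat.log 2 (j.val + 1), log_lt_KK (by have := j.isLt; omega)⟩ with hgfun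
  have hmap : ∀ j : Fin (h - 1), j ∈ Finset.univ → gfun j ∈ Finset.univ :=
    fun _ _ => Finset.mem_univ _
  rw [← Finset.prod_fiberwise_of_maps_to hmap (fun j : Fin (h - 1) => lb j.val)]
  apply Finset.prod_congr rfl
  intro k _
  rw [← Finset.prod_range_add_one_eq_factorial]
  refine Finset.prod_bij' (fun j _ => j.val + 1 - 2 ^ (k : ℕ))
    (fun i hi => ⟨2 ^ (k : ℕ) + i - 1, ?_⟩) ?_ ?_ ?_ ?_ ?_
  · -- bound of inverse index
    rw [Finset.mem_range] at hi
    have hbz : bsz h (k : ℕ) = min (2 ^ ((k : ℕ) + 1)) h - 2 ^ (k : ℕ) := rfl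
    have : 0 < 2 ^ (k : ℕ) := Nat.pow_pos (by omega)
    omega
  · -- maps to
    intro j hj
    simp only [Finset.mem_filter, Finset.mem_univ, true_and] at hj
    have hlog : Nat.log 2 (j.val + 1) = (k : ℕ) := congrArg Fin.val hj
    have h1 : 2 ^ (k : ℕ) ≤ j.val + 1 := hlog ▸ pow_log_le (by omega)
    have h2 : j.val + 1 < 2 ^ ((k : ℕ) + 1) := hlog ▸ lt_pow_log_succ (j.val + 1)
    have hjh : j.val + 1 < h := by have := j.isLt; omega
    rw [Finset.mem_range]
    have hbz : bsz h (k : ℕ) = min (2 ^ ((k : ℕ) + 1)) h - 2 ^ (k : ℕ) := rfl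
    show j.val + 1 - 2 ^ (k : ℕ) < bsz h (k : ℕ)
    omega
  · -- inverse maps to
    intro i hi
    rw [Finset.mem_range] at hi
    simp only [Finset.mem_filter, Finset.mem_univ, true_and]
    have hbz : bsz h (k : ℕ) = min (2 ^ ((k : ℕ) + 1)) h - 2 ^ (k : ℕ) := rfl
    have hp : 0 < 2 ^ (k : ℕ) := Nat.pow_pos (by omega)
    apply Fin.ext
    show Nat.log 2 (2 ^ (k : ℕ) + i - 1 + 1) = (k : ℕ)
    have : 2 ^ (k : ℕ) + i - 1 + 1 = 2 ^ (k : ℕ) + i := by omega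
    rw [this]
    exact Nat.log_eq_of_pow_le_of_lt_pow (by omega) (by rw [pow_succ]; omega)
  · -- left inverse
    intro j hj
    simp only [Finset.mem_filter, Finset.mem_univ, true_and] at hj
    have hlog : Nat.log 2 (j.val + 1) = (k : ℕ) := congrArg Fin.val hj
    have h1 : 2 ^ (k : ℕ) ≤ j.val + 1 := hlog ▸ pow_log_le (by omega)
    apply Fin.ext
    show 2 ^ (k : ℕ) + (j.val + 1 - 2 ^ (k : ℕ)) - 1 = j.val
    omega
  · -- right inverse
    intro i hi
    rw [Finset.mem_range] at hi
    have hp : 0 < 2 ^ (k : ℕ) := Nat.pow_pos (by omega)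
    show 2 ^ (k : ℕ) + i - 1 + 1 - 2 ^ (k : ℕ) = i
    omega
  · -- values agree
    intro j hj
    simp only [Finset.mem_filter, Finset.mem_univ, true_and] at hj
    have hlog : Nat.log 2 (j.val + 1) = (k : ℕ) := congrArg Fin.val hj
    have h1 : 2 ^ (k : ℕ) ≤ j.val + 1 := hlog ▸ pow_log_le (by omega)
    show lb j.val = j.val + 1 - 2 ^ (k : ℕ) + 1
    rw [lb, hlog]

lemma card_XX (hh : 0 < h) :
    (h.factorial * ∏ k : Fin (KK h + 1), (bsz h (k : ℕ)).factorial) ^ 2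
      ≤ Fintype.card (XX h) := by
  set B := ∏ k : Fin (KK h + 1), (bsz h (k : ℕ)).factorial with hB
  have hIdx : Fintype.card (Idx h) = h.factorial * B := by
    rw [Fintype.card_prod, Fintype.card_perm, Fintype.card_fin, Fintype.card_pi]
    congr 1
    apply Finset.prod_congr rfl
    intro k _
    rw [Fintype.card_perm, Fintype.card_fin]
  have hM : ∀ x : Idx h, h.factorial * B ≤ Fintype.card (Marks h x) := by
    intro x
    rw [Fintype.card_prod, Fintype.card_pi, Fintype.card_pi]
    simp only [Fintype.card_fin]
    have hL : h.factorial ≤ ∏ u : Fin h, lenL h x u := by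
      rw [← prod_sub_eq_factorial h]
      exact Finset.prod_le_prod' fun u _ => lenL_ge x u
    have hR : B ≤ ∏ j : Fin (h - 1), lenR h x j := by
      rw [hB, ← prod_lb_eq hh]
      exact Finset.prod_le_prod' fun j _ => lenR_ge x j
    exact Nat.mul_le_mul hL hR
  rw [Fintype.card_sigma]
  calc (h.factorial * B) ^ 2 = Fintype.card (Idx h) * (h.factorial * B) := by
        rw [hIdx]; ring
    _ ≤ ∑ x : Idx h, Fintype.card (Marks h x) := by
        rw [← Finset.card_univ, ← smul_eq_mul]
        exact Finset.card_nsmul_le_sum _ _ _ (fun x _ => hM x)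

lemma card_image_ge (hh : 0 < h) :
    (h.factorial * ∏ k : Fin (KK h + 1), (bsz h (k : ℕ)).factorial) ^ 2
      ≤ (2 ^ (h - 1) * 4 ^ h) * ((Finset.univ.image (Φ h)).card) := by
  refine le_trans (card_XX hh) ?_
  rw [← Finset.card_univ,
    Finset.card_eq_sum_card_fiberwise (fun x _ => Finset.mem_image_of_mem (Φ h) (Finset.mem_univ x))]
  calc ∑ M ∈ Finset.univ.image (Φ h),
        (Finset.univ.filter fun p : XX h => Φ h p = M).card
      ≤ (Finset.univ.image (Φ h)).card • (2 ^ (h - 1) * 4 ^ h) :=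
        Finset.sum_le_card_nsmul _ _ _ (fun M _ => fiber_card hh M)
    _ = (2 ^ (h - 1) * 4 ^ h) * ((Finset.univ.image (Φ h)).card) := by
        rw [smul_eq_mul]; ring

lemma target_finite (m t : ℕ) (σ : ℤ → ℕ) :
    {M : Multiset ((ℤ × ℤ) × ℤ) | IsMarkedSystem m σ t M}.Finite := by
  classical
  set box : Finset ((ℤ × ℤ) × ℤ) :=
    (Finset.Icc (0 : ℤ) (m : ℤ) ×ˢ Finset.Icc (0 : ℤ) (m : ℤ)) ×ˢ Finset.Icc (0 : ℤ) (m : ℤ)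
    with hbox
  apply Set.Finite.subset (Set.finite_range
    (fun v : Fin t → box =>
      ((List.ofFn fun i => ((v i : box) : (ℤ × ℤ) × ℤ) : List ((ℤ × ℤ) × ℤ)) :
        Multiset ((ℤ × ℤ) × ℤ))))
  rintro M ⟨hmk, ⟨hbnd, -⟩, -, hcard⟩
  have hel : ∀ a ∈ M, a ∈ box := by
    intro a ha
    have h1 := hmk a ha
    have h2 := hbnd a.1 (Multiset.mem_map_of_mem Prod.fst ha)
    rw [hbox]
    simp only [Finset.mem_product, Finset.mem_Icc]
    obtain ⟨g1, g2, g3⟩ := h2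
    obtain ⟨k1, k2⟩ := h1
    refine ⟨⟨⟨?_, ?_⟩, ?_, ?_⟩, ?_, ?_⟩ <;> omega
  obtain ⟨l, rfl⟩ : ∃ l : List ((ℤ × ℤ) × ℤ), M = ↑l := ⟨M.toList, (Multiset.coe_toList M).symm⟩
  rw [Multiset.coe_card] at hcard
  subst hcard
  refine ⟨fun i => ⟨l.get i, hel _ (by rw [Multiset.mem_coe]; exact l.get_mem i)⟩, ?_⟩
  exact congrArg (fun x : List ((ℤ × ℤ) × ℤ) => (x : Multiset ((ℤ × ℤ) × ℤ))) (List.ofFn_get l)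

lemma log_factorial_ge (N : ℕ) :
    (N : ℝ) * Real.log N - N ≤ Real.log (N.factorial) := by
  induction N with
  | zero => norm_num
  | succ N ih =>
    have h1 : ((N + 1).factorial : ℝ) = ((N : ℝ) + 1) * (N.factorial : ℝ) := by
      rw [Nat.factorial_succ]; push_cast; ring
    have hfpos : (0 : ℝ) < (N.factorial : ℝ) := by positivity
    rw [h1, Real.log_mul (by positivity) (ne_of_gt hfpos)]
    have key : (N : ℝ) * Real.log ((N : ℝ) + 1) ≤ (N : ℝ) * Real.log N + 1 := by
      rcases Nat.eq_zero_or_pos N with rfl | hN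
      · norm_num
      · have hNpos : (0 : ℝ) < N := by exact_mod_cast hN
        have hlog := Real.log_le_sub_one_of_pos
          (show (0 : ℝ) < ((N : ℝ) + 1) / N by positivity)
        rw [Real.log_div (by positivity) (ne_of_gt hNpos)] at hlog
        have h2 : ((N : ℝ) + 1) / N - 1 = 1 / N := by field_simp; ring
        rw [h2] at hlog
        have h3 : (N : ℝ) * (Real.log ((N : ℝ) + 1) - Real.log N) ≤ (N : ℝ) * (1 / N) :=
          mul_le_mul_of_nonneg_left hlog (le_of_lt hNpos)
        have h4 : (N : ℝ) * (1 / N) = 1 := by field_simp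
        nlinarith
    push_cast
    nlinarith [ih]

lemma sum2pow (n : ℕ) : ∑ k ∈ Finset.range n, 2 ^ k = 2 ^ n - 1 := by
  induction n with
  | zero => simp
  | succ n ih =>
    rw [Finset.sum_range_succ, ih, pow_succ]
    have : 1 ≤ 2 ^ n := Nat.one_le_two_pow
    omega

lemma sum_pow_weight (K : ℕ) : ∑ k ∈ Finset.range (K + 1), 2 ^ k * (K + 1 - k) ≤ 2 ^ (K + 2) := by
  induction K with
  | zero => simp
  | succ K ih =>
    have hsplit : ∀ k ∈ Finset.range (K + 2), 2 ^ k * (K + 2 - k) = 2 ^ k * (K + 1 - k) + 2 ^ k := by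
      intro k hk
      rw [Finset.mem_range] at hk
      have : K + 2 - k = (K + 1 - k) + 1 := by omega
      rw [this, Nat.mul_add, Nat.mul_one]
    rw [Finset.sum_congr rfl hsplit, Finset.sum_add_distrib, sum2pow,
      Finset.sum_range_succ]
    simp only [Nat.sub_self, Nat.mul_zero, Nat.add_zero]
    have h1 : 1 ≤ 2 ^ (K + 2) := Nat.one_le_two_pow
    have h2 : (2:ℕ) ^ (K + 1 + 2) = 2 * 2 ^ (K + 2) := by
      rw [show K + 1 + 2 = (K + 2) + 1 from rfl, pow_succ]; ring
    omega

lemma sum_bsz (hh : 0 < h) : ∑ k ∈ Finset.range (KK h + 1), bsz h k = h - 1 := by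
  have hmono : Monotone (fun k => min (2 ^ k) h) := by
    intro a b hab
    exact min_le_min (Nat.pow_le_pow_right (by omega) hab) (le_refl h)
  have htel : ∀ k ∈ Finset.range (KK h + 1),
      bsz h k = (fun k => min (2 ^ k) h) (k + 1) - (fun k => min (2 ^ k) h) k := by
    intro k _
    have h2 : (2 : ℕ) ^ k ≤ 2 ^ (k + 1) := by rw [pow_succ]; omega
    simp only [bsz]
    omega
  rw [Finset.sum_congr rfl htel, Finset.sum_range_tsub hmono]
  have h1 : h < 2 ^ (KK h + 1) := Nat.lt_pow_succ_log_self (by omega) h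
  have h2 : (1 : ℕ) = 2 ^ 0 := rfl
  simp only [pow_zero]
  omega

lemma sum_log_bsz (hh : 0 < h) :
    (h : ℝ) * Real.log h - 7 * h
      ≤ ∑ k ∈ Finset.range (KK h + 1), Real.log ((bsz h k).factorial) := by
  set K := KK h with hK
  have hlog2 : Real.log 2 ≤ 1 := by
    have := Real.log_le_sub_one_of_pos (show (0:ℝ) < 2 by norm_num)
    linarith
  have hlog2pos : 0 ≤ Real.log 2 := Real.log_nonneg (by norm_num)
  have hhK : h < 2 ^ (K + 1) := Nat.lt_pow_succ_log_self (by omega) h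
  -- pointwise bound
  have hd : ∀ k ∈ Finset.range (K + 1),
      (bsz h k : ℝ) * Real.log h - (bsz h k : ℝ) * ((K + 1 - k : ℕ) : ℝ) * Real.log 2
        - (if k = K then (h : ℝ) else 0) - (bsz h k : ℝ)
        ≤ Real.log ((bsz h k).factorial) := by
    intro k hk
    rw [Finset.mem_range] at hk
    have hlf := log_factorial_ge (bsz h k)
    have hite : (0:ℝ) ≤ (if k = K then (h : ℝ) else 0) := by split <;> positivity
    rcases le_or_gt (2 ^ (k + 1)) h with full | notfull
    · -- full block : bsz = 2^k
      have hs : bsz h k = 2 ^ k := by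
        have h2 : (2:ℕ) ^ (k+1) = 2 * 2^k := by rw [pow_succ]; ring
        simp only [bsz]
        omega
      have hlogh : Real.log h ≤ ((K + 1 : ℕ) : ℝ) * Real.log 2 := by
        have h1 : Real.log h ≤ Real.log ((2:ℝ) ^ (K + 1)) := by
          apply Real.log_le_log (by exact_mod_cast hh)
          exact_mod_cast le_of_lt hhK
        rwa [Real.log_pow] at h1
      have hlogs : Real.log (bsz h k : ℝ) = (k : ℝ) * Real.log 2 := by
        rw [hs]
        push_cast
        rw [Real.log_pow]
      have hcast : ((K + 1 - k : ℕ) : ℝ) = ((K+1 : ℕ) : ℝ) - (k : ℝ) := by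
        have : k ≤ K + 1 := by omega
        push_cast [Nat.cast_sub this]
        ring
      have hbpos : (0:ℝ) ≤ (bsz h k : ℝ) := by positivity
      have hmain : (bsz h k : ℝ) * Real.log h
          - (bsz h k : ℝ) * ((K + 1 - k : ℕ) : ℝ) * Real.log 2
          ≤ (bsz h k : ℝ) * Real.log (bsz h k) := by
        rw [hcast, hlogs]
        have := mul_le_mul_of_nonneg_left hlogh hbpos
        push_cast at this ⊢
        nlinarith
      nlinarith
    · -- partial or empty block
      rcases Nat.eq_zero_or_pos (bsz h k) with hz | hpos
      · rw [hz]
        simp only [Nat.cast_zero, zero_mul, mul_zero, Nat.factorial_zero, Nat.cast_one,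
          Real.log_one, zero_sub, sub_zero]
        linarith
      · have hkK : k = K := by
          have h2k : 2 ^ k < h := by
            have hbz : bsz h k = min (2 ^ (k+1)) h - 2 ^ k := rfl
            omega
          rw [hK, KK]
          exact (Nat.log_eq_of_pow_le_of_lt_pow (le_of_lt h2k) notfull).symm
        rw [if_pos hkK]
        -- s (log h - log s) ≤ h
        have hsh : bsz h k ≤ h := by
          have hbz : bsz h k = min (2 ^ (k+1)) h - 2 ^ k := rfl
          omega
        have hspos : (0:ℝ) < (bsz h k : ℝ) := by exact_mod_cast hpos
        have hdiv : Real.log ((h : ℝ) / (bsz h k : ℝ)) ≤ (h : ℝ) / (bsz h k : ℝ) := by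
          have := Real.log_le_sub_one_of_pos (show (0:ℝ) < (h:ℝ)/(bsz h k : ℝ) by positivity)
          linarith
        rw [Real.log_div (by positivity) (ne_of_gt hspos)] at hdiv
        have hmul := mul_le_mul_of_nonneg_left hdiv (le_of_lt hspos)
        have heq : (bsz h k : ℝ) * ((h:ℝ) / (bsz h k : ℝ)) = h := by field_simp
        have hw : (0:ℝ) ≤ (bsz h k : ℝ) * ((K + 1 - k : ℕ) : ℝ) * Real.log 2 := by positivity
        nlinarith
  have hsum := Finset.sum_le_sum hd
  -- evaluate the lower-bound sum
  have e1 : ∑ k ∈ Finset.range (K + 1), (bsz h k : ℝ) * Real.log h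
      = ((h : ℝ) - 1) * Real.log h := by
    rw [← Finset.sum_mul]
    congr 1
    rw [← Nat.cast_sum]
    rw [sum_bsz hh]
    push_cast [Nat.cast_sub (by omega : 1 ≤ h)]
    ring
  have e2 : ∑ k ∈ Finset.range (K + 1), (bsz h k : ℝ) * ((K + 1 - k : ℕ) : ℝ) * Real.log 2
      ≤ 4 * (h : ℝ) := by
    have step : ∀ k ∈ Finset.range (K + 1),
        (bsz h k : ℝ) * ((K + 1 - k : ℕ) : ℝ) * Real.log 2
          ≤ ((2 ^ k * (K + 1 - k) : ℕ) : ℝ) * Real.log 2 := by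
      intro k _
      have hble : bsz h k ≤ 2 ^ k := by
        have h2 : (2:ℕ) ^ (k+1) = 2 * 2^k := by rw [pow_succ]; ring
        have hbz : bsz h k = min (2 ^ (k+1)) h - 2 ^ k := rfl
        omega
      have : (bsz h k : ℝ) * ((K + 1 - k : ℕ) : ℝ) ≤ ((2 ^ k * (K + 1 - k) : ℕ) : ℝ) := by
        push_cast
        have h1 : (bsz h k : ℝ) ≤ ((2:ℝ) ^ k) := by exact_mod_cast hble
        have h2 : (0:ℝ) ≤ ((K + 1 - k : ℕ) : ℝ) := by positivity
        nlinarith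
      nlinarith
    refine le_trans (Finset.sum_le_sum step) ?_
    rw [← Finset.sum_mul, ← Nat.cast_sum]
    have h1 : ((∑ k ∈ Finset.range (K + 1), 2 ^ k * (K + 1 - k) : ℕ) : ℝ)
        ≤ ((2 ^ (K + 2) : ℕ) : ℝ) := by exact_mod_cast sum_pow_weight K
    have h2 : ((2 ^ (K + 2) : ℕ) : ℝ) ≤ 4 * h := by
      have : (2:ℕ) ^ (K + 2) = 4 * 2 ^ K := by ring
      have hKh : (2:ℕ) ^ K ≤ h := Nat.pow_log_le_self 2 (by omega)
      push_cast [this]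
      exact_mod_cast by nlinarith [hKh]
    nlinarith [Real.log_nonneg (show (1:ℝ) ≤ 2 by norm_num),
      Finset.sum_nonneg (fun k (_ : k ∈ Finset.range (K+1)) =>
        (by positivity : (0:ℝ) ≤ ((2 ^ k * (K + 1 - k) : ℕ) : ℝ)))]
  have e3 : ∑ k ∈ Finset.range (K + 1), (if k = K then (h : ℝ) else 0) = h := by
    rw [Finset.sum_ite_eq' (Finset.range (K + 1)) K (fun _ => (h : ℝ))]
    rw [if_pos (Finset.mem_range.mpr (by omega))]
  have e4 : ∑ k ∈ Finset.range (K + 1), (bsz h k : ℝ) = (h : ℝ) - 1 := by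
    rw [← Nat.cast_sum, sum_bsz hh]
    push_cast [Nat.cast_sub (by omega : 1 ≤ h)]
    ring
  have hlogh_le : Real.log h ≤ h := by
    have := Real.log_le_sub_one_of_pos (show (0:ℝ) < h by exact_mod_cast hh)
    linarith
  rw [Finset.sum_sub_distrib, Finset.sum_sub_distrib, Finset.sum_sub_distrib, e1, e3, e4]
    at hsum
  have hlogpos : 0 ≤ Real.log h := Real.log_natCast_nonneg h
  nlinarith [hsum, e2]

lemma XX_nonempty (h : ℕ) : Nonempty (XX h) :=
  ⟨⟨(1, fun _ => 1), (fun u => ⟨0, lenL_pos _ u⟩, fun j => ⟨0, lenR_pos _ j⟩)⟩⟩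

lemma image_card_pos (hh : 0 < h) : 0 < (Finset.univ.image (Φ h)).card := by
  obtain ⟨p⟩ := XX_nonempty h
  exact Finset.card_pos.mpr ⟨Φ h p, Finset.mem_image_of_mem _ (Finset.mem_univ p)⟩

lemma log_bound (hh : 0 < h) :
    4 * (h : ℝ) * Real.log h - 20 * h ≤ Real.log ((Finset.univ.image (Φ h)).card) := by
  set A := h.factorial * ∏ k : Fin (KK h + 1), (bsz h (k : ℕ)).factorial with hA
  set I := (Finset.univ.image (Φ h)).card with hI
  have h1 : ((A : ℝ)) ^ 2 ≤ ((2 ^ (h - 1) * 4 ^ h : ℕ) : ℝ) * I := by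
    exact_mod_cast card_image_ge hh
  have hApos : 0 < A :=
    Nat.mul_pos h.factorial_pos (Finset.prod_pos fun k _ => (bsz h (k : ℕ)).factorial_pos)
  have hApos' : (0 : ℝ) < (A : ℝ) := by exact_mod_cast hApos
  have hIpos : (0 : ℝ) < (I : ℝ) := by
    have := image_card_pos hh
    exact_mod_cast this
  have hFpos : (0 : ℝ) < ((2 ^ (h - 1) * 4 ^ h : ℕ) : ℝ) := by positivity
  have h2 : 2 * Real.log A ≤ Real.log ((2 ^ (h - 1) * 4 ^ h : ℕ) : ℝ) + Real.log I := by
    have h3 := Real.log_le_log (by positivity) h1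
    rw [Real.log_mul (ne_of_gt hFpos) (ne_of_gt hIpos)] at h3
    have h4 : Real.log ((A : ℝ) ^ 2) = 2 * Real.log A := by
      rw [Real.log_pow]; norm_num
    linarith [h4 ▸ h3]
  have hlog2 : Real.log 2 ≤ 1 := by
    have := Real.log_le_sub_one_of_pos (show (0:ℝ) < 2 by norm_num)
    linarith
  have hlog2pos : 0 ≤ Real.log 2 := Real.log_nonneg (by norm_num)
  have hlogF : Real.log ((2 ^ (h - 1) * 4 ^ h : ℕ) : ℝ) ≤ 3 * h := by
    have e : ((2 ^ (h - 1) * 4 ^ h : ℕ) : ℝ) = (2:ℝ) ^ (h-1) * (4:ℝ) ^ h := by push_cast; ring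
    rw [e, Real.log_mul (by positivity) (by positivity), Real.log_pow, Real.log_pow]
    have hlog4 : Real.log 4 = 2 * Real.log 2 := by
      rw [show (4:ℝ) = 2 ^ 2 by norm_num, Real.log_pow]; norm_num
    have hcast : ((h - 1 : ℕ) : ℝ) ≤ (h : ℝ) := by
      have : (h - 1 : ℕ) ≤ h := by omega
      exact_mod_cast this
    have hcast0 : (0:ℝ) ≤ ((h - 1 : ℕ) : ℝ) := by positivity
    rw [hlog4]
    have hhr : (1:ℝ) ≤ (h : ℝ) := by exact_mod_cast hh
    nlinarith
  have hlogA : 2 * (h : ℝ) * Real.log h - 8 * h ≤ Real.log A := by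
    rw [hA]
    have e : ((h.factorial * ∏ k : Fin (KK h + 1), (bsz h (k : ℕ)).factorial : ℕ) : ℝ)
        = (h.factorial : ℝ) * ∏ k : Fin (KK h + 1), ((bsz h (k : ℕ)).factorial : ℝ) := by
      push_cast; ring
    rw [e, Real.log_mul (by positivity) (by
      apply ne_of_gt
      apply Finset.prod_pos
      intro k _
      exact_mod_cast (bsz h (k : ℕ)).factorial_pos)]
    rw [Real.log_prod (fun k _ => by
      apply ne_of_gt
      exact_mod_cast (bsz h (k : ℕ)).factorial_pos)]
    have hsum : ∑ k : Fin (KK h + 1), Real.log ((bsz h (k : ℕ)).factorial)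
        = ∑ k ∈ Finset.range (KK h + 1), Real.log ((bsz h k).factorial) :=
      Fin.sum_univ_eq_sum_range (fun k => Real.log ((bsz h k).factorial)) (KK h + 1)
    rw [hsum]
    have hfac := log_factorial_ge h
    have hblk := sum_log_bsz hh
    linarith
  have hfin : Real.log I ≥ 2 * Real.log A - Real.log ((2 ^ (h - 1) * 4 ^ h : ℕ) : ℝ) := by
    linarith
  linarith

end S1


/-- Let `d ≥ 1`.  There is a constant `C > 0` (depending only on `d`) such
that for every `n ≥ 1`, the number `S_n` of marked admissible proper systems with parameters
`m = 2nd`, `σ(i) = min(i, 2nd - i)`, consisting of exactly `2nd - 1` intervals, satisfies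
`log S_n ≥ 4 d n log n - C n`. -/
theorem statement1 (d : ℕ) (hd : 1 ≤ d) :
    ∃ C : ℝ, 0 < C ∧ ∀ n : ℕ, 1 ≤ n →
      4 * (d : ℝ) * n * Real.log n - C * n ≤
        Real.log (Set.ncard {M : Multiset ((ℤ × ℤ) × ℤ) |
          IsMarkedSystem (2 * n * d)
            (fun i : ℤ => (min i (2 * (n : ℤ) * d - i)).toNat)
            (2 * n * d - 1) M}) := by
  refine ⟨20 * d + 1, by positivity, ?_⟩
  intro n hn
  set h := n * d with hh
  have hhpos : 0 < h := Nat.mul_pos hn hd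
  set T : Set (Multiset ((ℤ × ℤ) × ℤ)) := {M | IsMarkedSystem (2 * n * d)
      (fun i : ℤ => (min i (2 * (n : ℤ) * d - i)).toNat) (2 * n * d - 1) M} with hT
  have hsub : ↑(Finset.univ.image (S1.Φ h)) ⊆ T := by
    intro M hM
    rw [Finset.mem_coe, Finset.mem_image] at hM
    obtain ⟨p, -, rfl⟩ := hM
    have hmem := S1.main_mem hhpos p
    rw [hT, Set.mem_setOf_eq]
    have e1 : 2 * n * d = 2 * h := by rw [hh]; ring
    have e2 : 2 * n * d - 1 = h + (h - 1) := by rw [e1]; omega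
    have e0 : (2 * (n : ℤ) * d) = 2 * (h : ℤ) := by rw [hh]; push_cast; ring
    have e3 : (fun i : ℤ => (min i (2 * (n : ℤ) * d - i)).toNat)
        = (fun i : ℤ => (min i (2 * (h : ℤ) - i)).toNat) := by
      funext i
      rw [e0]
    rw [e2, e1, e3]
    exact hmem
  have hfin : T.Finite := S1.target_finite (2 * n * d) (2 * n * d - 1) _
  have hcard : (Finset.univ.image (S1.Φ h)).card ≤ T.ncard := by
    rw [← Set.ncard_coe_finset]
    exact Set.ncard_le_ncard hsub hfin
  have hIpos : (0 : ℝ) < ((Finset.univ.image (S1.Φ h)).card : ℝ) := by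
    exact_mod_cast S1.image_card_pos hhpos
  have hmono : Real.log ((Finset.univ.image (S1.Φ h)).card) ≤ Real.log (T.ncard) :=
    Real.log_le_log hIpos (by exact_mod_cast hcard)
  have hlb := S1.log_bound hhpos
  have hcast : (h : ℝ) = (n : ℝ) * d := by rw [hh]; push_cast; ring
  have hlogn : Real.log n ≤ Real.log h := by
    apply Real.log_le_log (by exact_mod_cast hn)
    have hnd : n ≤ n * d := by
      calc n = n * 1 := by ring
        _ ≤ n * d := Nat.mul_le_mul_left n hd
    rw [hh]
    exact_mod_cast hnd
  have hlogn0 : 0 ≤ Real.log n := Real.log_natCast_nonneg n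
  have hnr : (1 : ℝ) ≤ (n : ℝ) := by exact_mod_cast hn
  have hdr : (1 : ℝ) ≤ (d : ℝ) := by exact_mod_cast hd
  have hstep : 4 * (d : ℝ) * n * Real.log n - (20 * d + 1) * n
      ≤ 4 * (h : ℝ) * Real.log h - 20 * h := by
    rw [hcast]
    have hpos : (0 : ℝ) ≤ 4 * ((n : ℝ) * d) := by positivity
    have hlogn' : Real.log n ≤ Real.log ((n : ℝ) * d) := hcast ▸ hlogn
    nlinarith [mul_le_mul_of_nonneg_left hlogn' hpos]
  calc 4 * (d : ℝ) * n * Real.log n - (20 * d + 1) * n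
      ≤ 4 * (h : ℝ) * Real.log h - 20 * h := hstep
    _ ≤ Real.log ((Finset.univ.image (S1.Φ h)).card) := hlb
    _ ≤ Real.log (T.ncard) := hmono
end helpers
end

section
/- Let n, d ≥ 1 be integers with nd ≥ 2, and for each j ∈ {1,…,nd−1} let h_j be an integer with nd ≤ h_j ≤ nd + j − 1. Then the multiset consisting of the one-point interval [nd, nd] together with, for each j ∈ {1,…,nd−1}, the two intervals [nd − j, h_j] and [h_j + 1, nd + j], is an admissible proper system with parameters m = 2nd and σ(i) = min(i, 2nd − i), consisting of exactly 2nd − 1 intervals. -/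
/-- The multiset consisting of the one-point interval `[N, N]` together with, for each
`j ∈ {1, …, N-1}`, the two intervals `[N - j, h j]` and `[h j + 1, N + j]`. -/
def squareSystem (N : ℕ) (h : ℕ → ℤ) : Multiset (ℤ × ℤ) :=
  ((N : ℤ), (N : ℤ)) ::ₘ
    (Finset.Icc 1 (N - 1)).val.bind fun j =>
      {((N : ℤ) - j, h j), (h j + 1, (N : ℤ) + j)}

/-!
An interval `[a, b]` with `1 ≤ a ≤ b < m` is adjacent to exactly two vertices, `w_b` and `w_{a-1}`,
so the graph of a system of `t` such intervals is bipartite with `2t` edges and `t + m` vertices: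
for `t = m - 1` it is a tree as soon as it is connected.

Write `N = nd`. Since `[N - j, h_j]` and `[h_j + 1, N + j]` partition `[N - j, N + j]`, a point `i`
lies in exactly `N - |i - N|` intervals. Each `w_i` with `i ≠ N` is joined through one interval
to some `w_{i'}` with `|i' - N| < |i - N|`: `w_{N+j}` and `w_{N-1-j}` to `w_{h_j}`, and `w_{N-1}`
to `w_N` through `[N, N]`. Descending along `|i - N|` connects every `w_i` to `w_N`.
-/

open SimpleGraph Finset

lemma SimpleGraph.reachable_of_descent {V ι : Type*} (G : SimpleGraph V) (φ : ι → V)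
    (d : ι → ℕ) (i₀ : ι) (h : ∀ i ≠ i₀, ∃ j, d j < d i ∧ G.Reachable (φ j) (φ i)) (i : ι) :
    G.Reachable (φ i₀) (φ i) := by
  induction hn : d i using Nat.strong_induction_on generalizing i with
  | _ n ih =>
    by_cases hi : i = i₀
    · rw [hi]
    · obtain ⟨j, hj, hr⟩ := h i hi
      exact (ih _ (hn ▸ hj) j rfl).trans hr

section SystemGraph

variable {m t : ℕ} {f : Fin t → ℤ × ℤ}

lemma systemGraph_adj_inl_inr {k : Fin t} {i : Fin m} :
    (systemGraph m f).Adj (.inl k) (.inr i) ↔ (f k).2 = i ∨ (f k).1 = i + 1 := by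
  simp [systemGraph]

lemma systemGraph_isBipartiteWith :
    (systemGraph m f).IsBipartiteWith ↑(univ.map .inl : Finset (Fin t ⊕ Fin m))
      ↑(univ.map .inr : Finset (Fin t ⊕ Fin m)) where
  disjoint := by simp [Set.disjoint_left]
  mem_of_adj := by rintro (k | i) (k' | i') hadj <;> simp_all [systemGraph]

lemma systemGraph_exists_adj_right {k : Fin t}
    (hk : 1 ≤ (f k).1 ∧ (f k).1 ≤ (f k).2 ∧ (f k).2 < m) :
    ∃ i : Fin m, (i : ℤ) = (f k).2 ∧ (systemGraph m f).Adj (.inl k) (.inr i) :=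
  ⟨⟨(f k).2.toNat, by omega⟩, by simp only; omega,
    systemGraph_adj_inl_inr.mpr (.inl (by simp only; omega))⟩

lemma systemGraph_exists_adj_left {k : Fin t}
    (hk : 1 ≤ (f k).1 ∧ (f k).1 ≤ (f k).2 ∧ (f k).2 < m) :
    ∃ i : Fin m, (i : ℤ) + 1 = (f k).1 ∧ (systemGraph m f).Adj (.inl k) (.inr i) :=
  ⟨⟨((f k).1 - 1).toNat, by omega⟩, by simp only; omega,
    systemGraph_adj_inl_inr.mpr (.inr (by simp only; omega))⟩

lemma systemGraph_degree_inl {k : Fin t} (hk : 1 ≤ (f k).1 ∧ (f k).1 ≤ (f k).2 ∧ (f k).2 < m)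
    [Fintype ((systemGraph m f).neighborSet (.inl k))] :
    (systemGraph m f).degree (.inl k) = 2 := by
  classical
  have hnbr : (systemGraph m f).neighborFinset (.inl k) =
      {.inr ⟨(f k).2.toNat, by omega⟩, .inr ⟨((f k).1 - 1).toNat, by omega⟩} := by
    ext (k' | i)
    · rw [mem_neighborFinset]
      simp [systemGraph]
    · simp only [mem_neighborFinset, systemGraph_adj_inl_inr, mem_insert, mem_singleton,
        Sum.inr.injEq, Fin.ext_iff]
      omega
  rw [← card_neighborFinset_eq_degree, hnbr,
    card_pair (by simp only [ne_eq, Sum.inr.injEq, Fin.ext_iff]; omega)]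

variable (hf : ∀ k, 1 ≤ (f k).1 ∧ (f k).1 ≤ (f k).2 ∧ (f k).2 < m)
include hf

lemma systemGraph_card_edgeSet :
    Nat.card (systemGraph m f).edgeSet = 2 * t := by
  classical
  rw [Nat.card_eq_fintype_card, ← edgeFinset_card,
    ← isBipartiteWith_sum_degrees_eq_card_edges systemGraph_isBipartiteWith, sum_map]
  exact (sum_congr rfl fun k _ => systemGraph_degree_inl (hf k)).trans (by simp [mul_comm])

lemma systemGraph_isTree_iff :
    (systemGraph m f).IsTree ↔ (systemGraph m f).Connected ∧ t + 1 = m := by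
  rw [isTree_iff_connected_and_card, systemGraph_card_edgeSet hf, Nat.card_sum, Nat.card_fin,
    Nat.card_fin]
  exact and_congr_right fun _ => by omega

lemma systemGraph_connected {c : ℕ} (hc : c < m)
    (hlink : ∀ i : ℤ, 0 ≤ i → i < m → i ≠ c → ∃ k,
      ((f k).2 = i ∧ ((f k).1 - 1 - c).natAbs < (i - c).natAbs) ∨
      ((f k).1 = i + 1 ∧ ((f k).2 - c).natAbs < (i - c).natAbs)) :
    (systemGraph m f).Connected := by
  have hw : ∀ i : Fin m, (systemGraph m f).Reachable (.inr ⟨c, hc⟩) (.inr i) := by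
    refine reachable_of_descent _ Sum.inr (fun i : Fin m => ((i : ℤ) - c).natAbs) _
      fun i hi => ?_
    have hic : (i : ℤ) ≠ c := fun h => hi (Fin.ext (by exact_mod_cast h))
    obtain ⟨k, ⟨hright, hlt⟩ | ⟨hleft, hlt⟩⟩ := hlink i (by omega) (by omega) hic
    · obtain ⟨j, hj, hadj⟩ := systemGraph_exists_adj_left (hf k)
      exact ⟨j, by omega,
        hadj.symm.reachable.trans (systemGraph_adj_inl_inr.mpr (.inl hright)).reachable⟩
    · obtain ⟨j, hj, hadj⟩ := systemGraph_exists_adj_right (hf k)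
      exact ⟨j, by omega,
        hadj.symm.reachable.trans (systemGraph_adj_inl_inr.mpr (.inr hleft)).reachable⟩
  refine (connected_iff_exists_forall_reachable _).mpr ⟨.inr ⟨c, hc⟩, ?_⟩
  rintro (k | i)
  · obtain ⟨j, -, hadj⟩ := systemGraph_exists_adj_right (hf k)
    exact (hw j).trans hadj.symm.reachable
  · exact hw i

end SystemGraph

lemma isAdmissible_of_forall_link {m : ℕ} {S : Multiset (ℤ × ℤ)}
    (hS : ∀ I ∈ S, 1 ≤ I.1 ∧ I.1 ≤ I.2 ∧ I.2 < m) (hcard : S.card + 1 = m) {c : ℕ} (hc : c < m)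
    (hlink : ∀ i : ℤ, 0 ≤ i → i < m → i ≠ c → ∃ I ∈ S,
      (I.2 = i ∧ (I.1 - 1 - c).natAbs < (i - c).natAbs) ∨
      (I.1 = i + 1 ∧ (I.2 - c).natAbs < (i - c).natAbs)) :
    IsAdmissible m S := by
  have hf : ∀ k, 1 ≤ (S.toList.get k).1 ∧ (S.toList.get k).1 ≤ (S.toList.get k).2 ∧
      (S.toList.get k).2 < m := fun k => hS _ (Multiset.mem_toList.mp (List.get_mem _ _))
  refine ⟨_, S.toList.get, by rw [List.ofFn_get, Multiset.coe_toList], ?_⟩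
  refine (systemGraph_isTree_iff hf).mpr ⟨systemGraph_connected hf hc fun i h0 him hic => ?_, ?_⟩
  · obtain ⟨I, hI, hlinkI⟩ := hlink i h0 him hic
    obtain ⟨k, rfl⟩ := List.mem_iff_get.mp (Multiset.mem_toList.mpr hI)
    exact ⟨k, hlinkI⟩
  · simpa using hcard

section SquareSystem

variable {N : ℕ} {h : ℕ → ℤ}

lemma mem_squareSystem {I : ℤ × ℤ} :
    I ∈ squareSystem N h ↔ I = ((N : ℤ), (N : ℤ)) ∨
      ∃ j ∈ Finset.Icc 1 (N - 1), I = ((N : ℤ) - j, h j) ∨ I = (h j + 1, (N : ℤ) + j) := by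
  simp [squareSystem, eq_comm, and_or_left, exists_or]

lemma card_squareSystem (hN : 1 ≤ N) : (squareSystem N h).card = 2 * N - 1 := by
  simp only [squareSystem, Multiset.insert_eq_cons, Multiset.bind_cons, Multiset.bind_singleton,
    Multiset.card_cons, Multiset.card_add, Multiset.card_map, card_val, Nat.card_Icc]
  omega

variable (hh : ∀ j, 1 ≤ j → j ≤ N - 1 → (N : ℤ) ≤ h j ∧ h j ≤ N + j - 1)
include hh

lemma squareSystem_bounds (hN : 1 ≤ N) :
    ∀ I ∈ squareSystem N h, 1 ≤ I.1 ∧ I.1 ≤ I.2 ∧ I.2 < 2 * N := by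
  intro I hI
  obtain rfl | ⟨j, hj, rfl | rfl⟩ := mem_squareSystem.mp hI
  · omega
  all_goals
    rw [Finset.mem_Icc] at hj
    have := hh j hj.1 hj.2
    dsimp only
    omega

lemma card_filter_squareSystem_pair {j : ℕ} (hj : j ∈ Finset.Icc 1 (N - 1)) (i : ℤ) :
    (({((N : ℤ) - j, h j), (h j + 1, (N : ℤ) + j)} : Multiset (ℤ × ℤ)).filter
      fun I => I.1 ≤ i ∧ i ≤ I.2).card = if (i - N).natAbs ≤ j then 1 else 0 := by
  rw [Finset.mem_Icc] at hj
  have := hh j hj.1 hj.2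
  simp only [Multiset.insert_eq_cons, Multiset.filter_cons, Multiset.filter_singleton]
  split_ifs <;> simp only [Multiset.card_add, Multiset.card_singleton, Multiset.empty_eq_zero,
    Multiset.card_zero] <;> omega

lemma card_filter_squareSystem (hN : 1 ≤ N) {i : ℤ} (h0 : 0 ≤ i) (hi : i ≤ 2 * N) :
    ((squareSystem N h).filter fun I => I.1 ≤ i ∧ i ≤ I.2).card = (min i (2 * N - i)).toNat := by
  have hpairs : ((Finset.Icc 1 (N - 1)).val.bind fun j => ({((N : ℤ) - j, h j),
      (h j + 1, (N : ℤ) + j)} : Multiset (ℤ × ℤ)).filter fun I => I.1 ≤ i ∧ i ≤ I.2).card =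
      ((Finset.Icc 1 (N - 1)).filter fun j => (i - N).natAbs ≤ j).card := by
    rw [Multiset.card_bind, Finset.card_filter]
    exact Finset.sum_congr rfl fun j hj => card_filter_squareSystem_pair hh hj i
  have hIcc : (Finset.Icc 1 (N - 1)).filter (fun j => (i - N).natAbs ≤ j) =
      Finset.Icc (max 1 (i - N).natAbs) (N - 1) := by
    ext j
    simp only [Finset.mem_filter, Finset.mem_Icc, max_le_iff]
    omega
  rw [squareSystem, Multiset.filter_cons, Multiset.card_add, Multiset.filter_bind, hpairs, hIcc,
    Nat.card_Icc]
  split_ifs <;> simp only [Multiset.card_singleton, Multiset.card_zero] <;> omega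

lemma exists_mem_squareSystem_link {i : ℤ} (h0 : 0 ≤ i) (hi : i < 2 * N) (hiN : i ≠ N) :
    ∃ I ∈ squareSystem N h, (I.2 = i ∧ (I.1 - 1 - N).natAbs < (i - N).natAbs) ∨
      (I.1 = i + 1 ∧ (I.2 - N).natAbs < (i - N).natAbs) := by
  rcases lt_or_gt_of_ne hiN with hlt | hgt
  · by_cases hC : i = N - 1
    · exact ⟨_, mem_squareSystem.mpr (.inl rfl),
        .inr ⟨by omega, by simp only [sub_self, Int.natAbs_zero]; omega⟩⟩
    set j := (N - 1 - i).toNat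
    have hj : j ∈ Finset.Icc 1 (N - 1) := by simp only [Finset.mem_Icc]; omega
    have := hh j (by omega) (by omega)
    exact ⟨_, mem_squareSystem.mpr (.inr ⟨j, hj, .inl rfl⟩), .inr ⟨by dsimp only; omega,
      by dsimp only; omega⟩⟩
  · set j := (i - N).toNat
    have hj : j ∈ Finset.Icc 1 (N - 1) := by simp only [Finset.mem_Icc]; omega
    have := hh j (by omega) (by omega)
    exact ⟨_, mem_squareSystem.mpr (.inr ⟨j, hj, .inr rfl⟩), .inl ⟨by dsimp only; omega,
      by dsimp only; omega⟩⟩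

end SquareSystem

theorem statement5_general (n d : ℕ) (hnd : 2 ≤ n * d) (h : ℕ → ℤ)
    (hh : ∀ j : ℕ, 1 ≤ j → j ≤ n * d - 1 →
      (n * d : ℤ) ≤ h j ∧ h j ≤ (n * d : ℤ) + j - 1) :
    IsProperSystem (2 * (n * d)) (fun i : ℤ => (min i (2 * ((n : ℤ) * d) - i)).toNat)
        (squareSystem (n * d) h) ∧
      IsAdmissible (2 * (n * d)) (squareSystem (n * d) h) ∧
      (squareSystem (n * d) h).card = 2 * (n * d) - 1 := by
  have hN : 1 ≤ n * d := by omega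
  have hh' : ∀ j, 1 ≤ j → j ≤ n * d - 1 →
      ((n * d : ℕ) : ℤ) ≤ h j ∧ h j ≤ (n * d : ℕ) + j - 1 := by
    exact_mod_cast hh
  have hbounds := squareSystem_bounds hh' hN
  refine ⟨⟨fun I hI => ?_, fun i h0 hi => ?_⟩, ?_, card_squareSystem hN⟩
  · have := hbounds I hI
    omega
  · exact_mod_cast card_filter_squareSystem hh' hN h0 (by exact_mod_cast hi)
  · refine isAdmissible_of_forall_link hbounds ?_ (by omega : n * d < 2 * (n * d)) ?_
    · rw [card_squareSystem hN]
      omega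
    · exact fun i h0 hi hiN => exists_mem_squareSystem_link hh' h0 (by exact_mod_cast hi) hiN

/-- Let `n, d ≥ 1` with `nd ≥ 2`, and for each `j ∈ {1, …, nd-1}` let `h j`
be an integer with `nd ≤ h j ≤ nd + j - 1`.  Then the multiset consisting of the one-point
interval `[nd, nd]` together with, for each `j`, the two intervals `[nd - j, h j]` and
`[h j + 1, nd + j]`, is an admissible proper system with parameters `m = 2nd` and
`σ(i) = min(i, 2nd - i)`, consisting of exactly `2nd - 1` intervals. -/
theorem statement5 (n d : ℕ) (hn : 1 ≤ n) (hd : 1 ≤ d) (hnd : 2 ≤ n * d) (h : ℕ → ℤ)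
    (hh : ∀ j : ℕ, 1 ≤ j → j ≤ n * d - 1 →
      (n * d : ℤ) ≤ h j ∧ h j ≤ (n * d : ℤ) + j - 1) :
    IsProperSystem (2 * (n * d)) (fun i : ℤ => (min i (2 * ((n : ℤ) * d) - i)).toNat)
        (squareSystem (n * d) h) ∧
      IsAdmissible (2 * (n * d)) (squareSystem (n * d) h) ∧
      (squareSystem (n * d) h).card = 2 * (n * d) - 1 :=
  statement5_general n d hnd h hh
end

section
/- Let n ≥ 1 and d, d₁ be integers with 1 ≤ d₁ < d; set a = n(d − d₁) and m = n(2d − d₁). For tuples (h, g) as follows — integers h_j with a ≤ h_j ≤ a + j − 1 for j ∈ {1,…,a−1}, and integers g_j with a + n⌊(j−a)/n⌋ ≤ g_j ≤ a + n⌊(j−a)/n⌋ + n − 1 for j ∈ {a,…,nd−1} — let Λ(h, g) be the multiset consisting of the one-point interval [a, a], the intervals [a − j, h_j] and [h_j + 1, a + j] for j = 1,…,a−1, and the intervals [0, g_j] and [g_j + 1, a + j] for j = a,…,nd−1. Then the map (h, g) ↦ Λ(h, g) is injective, and consequently the number of admissible proper systems with parameters m = n(2d − d₁) and σ(i) = min(n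 d₁ + i, m − i), consisting of exactly 2nd − 1 intervals, is at least (a − 1)! · n^{n d₁}. -/
/-- The multiset `Λ(h, g)` consisting of the one-point interval `[a, a]`, the intervals
`[a - j, h j]` and `[h j + 1, a + j]` for `j = 1, …, a - 1`, and the intervals `[0, g j]`
and `[g j + 1, a + j]` for `j = a, …, N - 1`. -/
def pentagonSystem (a N : ℕ) (h g : ℕ → ℤ) : Multiset (ℤ × ℤ) :=
  ((a : ℤ), (a : ℤ)) ::ₘ
    (((Finset.Icc 1 (a - 1)).val.bind fun j =>
        {((a : ℤ) - j, h j), (h j + 1, (a : ℤ) + j)}) +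
      ((Finset.Icc a (N - 1)).val.bind fun j =>
        {((0 : ℤ), g j), (g j + 1, (a : ℤ) + j)}))

namespace SimpleGraph

variable {V : Type*} {G : SimpleGraph V}

theorem isAcyclic_of_unique_lower_neighbor (rk : V → ℕ)
    (hne : ∀ ⦃u v⦄, G.Adj u v → rk u ≠ rk v)
    (huniq : ∀ ⦃v u w⦄, G.Adj v u → G.Adj v w → rk u < rk v → rk w < rk v → u = w) :
    G.IsAcyclic := by
  classical
  intro v c hc
  obtain ⟨u, hu, hmax⟩ := c.support.toFinset.exists_max_image rk ⟨v, by simp⟩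
  rw [List.mem_toFinset] at hu
  set c' := c.rotate u hu
  have hc' : c'.IsCycle := hc.rotate hu
  have hlow : ∀ w ∈ c'.support, G.Adj u w → rk w < rk u := fun w hw hadj =>
    (hmax w (by simpa [c'] using hw)).lt_of_ne (hne hadj).symm
  have hsnd := c'.adj_snd hc'.not_nil
  have hpen := (c'.adj_penultimate hc'.not_nil).symm
  exact hc'.snd_ne_penultimate <| huniq hsnd hpen
    (hlow _ (c'.getVert_mem_support _) hsnd) (hlow _ (c'.getVert_mem_support _) hpen)

theorem connected_of_exists_lower_neighbor (rk : V → ℕ) (root : V)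
    (hex : ∀ v, v ≠ root → ∃ u, G.Adj v u ∧ rk u < rk v) : G.Connected := by
  have reach : ∀ k v, rk v = k → G.Reachable v root := fun k =>
    Nat.strong_induction_on k fun k ih v hv => by
      by_cases hroot : v = root
      · exact hroot ▸ .refl v
      obtain ⟨u, hadj, hlt⟩ := hex v hroot
      exact hadj.reachable.trans (ih _ (hv ▸ hlt) u rfl)
  exact G.connected_iff_exists_forall_reachable.2 ⟨root, fun v => (reach _ v rfl).symm⟩

theorem isTree_of_lower_neighbor (rk : V → ℕ) (root : V)
    (hne : ∀ ⦃u v⦄, G.Adj u v → rk u ≠ rk v)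
    (huniq : ∀ ⦃v u w⦄, G.Adj v u → G.Adj v w → rk u < rk v → rk w < rk v → u = w)
    (hex : ∀ v, v ≠ root → ∃ u, G.Adj v u ∧ rk u < rk v) : G.IsTree :=
  ⟨connected_of_exists_lower_neighbor rk root hex,
    isAcyclic_of_unique_lower_neighbor rk hne huniq⟩

end SimpleGraph

theorem Multiset.finite_card_eq_of_forall_mem {α : Type*} [DecidableEq α] (B : Finset α)
    (t : ℕ) : {S : Multiset α | S.card = t ∧ ∀ x ∈ S, x ∈ B}.Finite := by
  refine ((B.sym t).finite_toSet.image ((↑) : Sym α t → Multiset α)).subset ?_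
  rintro S ⟨hcard, hB⟩
  exact ⟨⟨S, hcard⟩, Finset.mem_sym_iff.2 hB, rfl⟩

section IntervalGraph

variable {ι : Type*}

def intervalGraph (m : ℕ) (φ : ι → ℤ × ℤ) : SimpleGraph (ι ⊕ Fin m) :=
  SimpleGraph.fromRel fun u v =>
    match u, v with
    | Sum.inl j, Sum.inr i => (φ j).2 = (i : ℤ) ∨ (φ j).1 = (i : ℤ) + 1
    | _, _ => False

namespace intervalGraph

variable {m : ℕ} {φ : ι → ℤ × ℤ}

@[simp] theorem adj_inl_inr {k : ι} {i : Fin m} :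
    (intervalGraph m φ).Adj (.inl k) (.inr i) ↔ (φ k).2 = i ∨ (φ k).1 = i + 1 := by
  simp [intervalGraph]

@[simp] theorem adj_inr_inl {k : ι} {i : Fin m} :
    (intervalGraph m φ).Adj (.inr i) (.inl k) ↔ (φ k).2 = i ∨ (φ k).1 = i + 1 := by
  simp [intervalGraph]

@[simp] theorem not_adj_inl_inl {k k' : ι} : ¬ (intervalGraph m φ).Adj (.inl k) (.inl k') := by
  simp [intervalGraph]

@[simp] theorem not_adj_inr_inr {i i' : Fin m} :
    ¬ (intervalGraph m φ).Adj (.inr i) (.inr i') := by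
  simp [intervalGraph]

def isoOfEquiv {κ : Type*} (e : ι ≃ κ) (φ : κ → ℤ × ℤ) :
    intervalGraph m (φ ∘ e) ≃g intervalGraph m φ where
  toEquiv := e.sumCongr (.refl _)
  map_rel_iff' := by rintro (k | i) (k' | i') <;> simp

end intervalGraph

theorem systemGraph_eq_intervalGraph {t m : ℕ} (f : Fin t → ℤ × ℤ) :
    systemGraph m f = intervalGraph m f := by
  ext (k | i) (k' | i') <;> simp [systemGraph]

theorem isAdmissible_of_isTree [Fintype ι] {m : ℕ} {φ : ι → ℤ × ℤ}
    (h : (intervalGraph m φ).IsTree) : IsAdmissible m (Finset.univ.val.map φ) := by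
  let e := Fintype.equivFin ι
  refine ⟨_, φ ∘ e.symm, ?_, ?_⟩
  · rw [← Fin.univ_val_map, ← Multiset.map_map, Multiset.map_univ_val_equiv]
  · rw [systemGraph_eq_intervalGraph]
    exact (intervalGraph.isoOfEquiv e (φ ∘ e.symm)).isTree_iff.1
      (by simpa [Function.comp_def] using h)

end IntervalGraph

theorem card_filter_pair_of_le {l c r x : ℤ} (hl : l ≤ c + 1) (hr : c ≤ r) :
    (({(l, c), (c + 1, r)} : Multiset (ℤ × ℤ)).filter fun I => I.1 ≤ x ∧ x ≤ I.2).card =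
      if l ≤ x ∧ x ≤ r then 1 else 0 := by
  simp only [Multiset.insert_eq_cons, Multiset.filter_cons, Multiset.filter_singleton]
  split_ifs <;> simp only [Multiset.empty_eq_zero, Multiset.add_zero, Multiset.zero_add,
    Multiset.singleton_add, Multiset.card_cons, Multiset.card_singleton, Multiset.card_zero] <;>
    omega

def leftEnd (a j : ℕ) : ℤ := max ((a : ℤ) - j) 0

def splitSystem (a N : ℕ) (e : ℕ → ℤ) : Multiset (ℤ × ℤ) :=
  ((a : ℤ), (a : ℤ)) ::ₘ (Finset.Ico 1 N).val.bind fun j =>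
    {(leftEnd a j, e j), (e j + 1, (a : ℤ) + j)}

def IsSplitting (a N : ℕ) (e : ℕ → ℤ) : Prop :=
  ∀ j ∈ Finset.Ico 1 N, (a : ℤ) ≤ e j ∧ e j < a + j

section SplitSystem

variable {a N : ℕ} {e e' : ℕ → ℤ}

theorem mem_splitSystem {I : ℤ × ℤ} :
    I ∈ splitSystem a N e ↔ I = ((a : ℤ), (a : ℤ)) ∨
      ∃ j ∈ Finset.Ico 1 N, I = (leftEnd a j, e j) ∨ I = (e j + 1, (a : ℤ) + j) := by
  simp only [splitSystem, Multiset.mem_cons, Multiset.mem_bind, Finset.mem_val,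
    Multiset.insert_eq_cons, Multiset.mem_singleton]

theorem splitSystem_congr (h : ∀ j ∈ Finset.Ico 1 N, e j = e' j) :
    splitSystem a N e = splitSystem a N e' := by
  unfold splitSystem
  congr 1
  exact Multiset.bind_congr fun j hj => by rw [h j hj]

theorem card_splitSystem (hN : 1 ≤ N) : (splitSystem a N e).card = 2 * N - 1 := by
  simp only [splitSystem, Multiset.insert_eq_cons, Multiset.bind_cons, Multiset.bind_singleton,
    Multiset.card_cons, Multiset.card_add, Multiset.card_map, Finset.card_val, Nat.card_Ico]
  omega

theorem eqOn_of_splitSystem_eq (he : ∀ j ∈ Finset.Ico 1 N, (a : ℤ) ≤ e j)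
    (h : splitSystem a N e = splitSystem a N e') : ∀ j ∈ Finset.Ico 1 N, e j = e' j := by
  intro j hj
  have hmem : (e j + 1, (a : ℤ) + j) ∈ splitSystem a N e' :=
    h ▸ mem_splitSystem.2 (.inr ⟨j, hj, .inr rfl⟩)
  have := he j hj
  simp only [Finset.mem_Ico] at hj
  rcases mem_splitSystem.1 hmem with h | ⟨k, -, h | h⟩ <;>
    simp only [Prod.mk.injEq, leftEnd] at h
  · omega
  · omega
  · obtain rfl : k = j := by omega
    omega

theorem card_filter_splitSystem (he : IsSplitting a N e) {x : ℤ} (hx : 0 ≤ x) :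
    ((splitSystem a N e).filter fun I => I.1 ≤ x ∧ x ≤ I.2).card =
      (if x = a then 1 else 0) + ((Finset.Ico 1 N).filter fun j => (x - a).natAbs ≤ j).card := by
  rw [splitSystem, Multiset.filter_cons, Multiset.filter_bind, Multiset.card_add,
    Multiset.card_bind, Finset.card_filter]
  congr 1
  · simp only [apply_ite Multiset.card, Multiset.card_singleton, Multiset.card_zero]
    split_ifs <;> omega
  · refine congrArg Multiset.sum (Multiset.map_congr rfl fun j hj => ?_)
    obtain ⟨hlo, hhi⟩ := he j hj
    rw [Function.comp_apply, card_filter_pair_of_le (by unfold leftEnd; omega) hhi.le]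
    refine if_congr ?_ rfl rfl
    rw [leftEnd]
    omega

theorem isProperSystem_splitSystem (hN : 1 ≤ N) (he : IsSplitting a N e) :
    IsProperSystem (a + N) (fun x => (min ((N : ℤ) - a + x) ((a : ℤ) + N - x)).toNat)
      (splitSystem a N e) := by
  refine ⟨fun I hI => ?_, fun x hx hxm => ?_⟩
  · rcases mem_splitSystem.1 hI with rfl | ⟨j, hj, rfl | rfl⟩
    · omega
    all_goals
      have := he j hj
      simp only [Finset.mem_Ico] at hj
      simp only [leftEnd]
      omega
  · have hfilter : ((Finset.Ico 1 N).filter fun j => (x - a).natAbs ≤ j) =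
        Finset.Ico (max 1 (x - a).natAbs) N := by
      ext j
      simp only [Finset.mem_filter, Finset.mem_Ico]
      omega
    rw [card_filter_splitSystem he hx, hfilter, Nat.card_Ico]
    dsimp only
    split_ifs <;> omega

end SplitSystem

def splitIndex (N : ℕ) : Finset (ℕ × Bool) :=
  insert (0, false) (Finset.Ico 1 N ×ˢ Finset.univ)

def splitPiece (a : ℕ) (e : ℕ → ℤ) : ℕ × Bool → ℤ × ℤ
  | (j, false) => (leftEnd a j, e j)
  | (j, true) => (e j + 1, (a : ℤ) + j)

def lowerPiece (a i : ℕ) : ℕ × Bool :=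
  if i ≤ a then (a - 1 - i, false) else (i - a, true)

section Admissibility

variable {a N : ℕ} {e : ℕ → ℤ}

theorem splitSystem_eq_map (h0 : e 0 = a) :
    splitSystem a N e = (splitIndex N).val.map (splitPiece a e) := by
  rw [splitIndex, Finset.insert_val_of_notMem (by simp), Multiset.map_cons, Finset.product_val]
  simp [splitSystem, splitPiece, leftEnd, h0, ← Multiset.cons_zero, Function.comp_def, add_comm]

theorem eq_of_adj_splitPiece {p : ℕ × Bool} {i : ℤ} (hi : 0 ≤ i)
    (hadj : (splitPiece a e p).2 = i ∨ (splitPiece a e p).1 = i + 1)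
    (hlt : (2 * i - 2 * a + 1).natAbs < 2 * p.1) : i = e p.1 := by
  obtain ⟨j, _ | _⟩ := p <;> simp only [splitPiece, leftEnd] at hadj hlt ⊢ <;> omega

theorem eq_lowerPiece_of_adj_splitPiece (he : IsSplitting a N e) (h0 : e 0 = a)
    {p : ℕ × Bool} (hp : p ∈ splitIndex N) {i : ℕ}
    (hadj : (splitPiece a e p).2 = i ∨ (splitPiece a e p).1 = i + 1)
    (hlt : 2 * p.1 < (2 * (i : ℤ) - 2 * a + 1).natAbs) : p = lowerPiece a i := by
  simp only [splitIndex, Finset.mem_insert, Finset.mem_product, Finset.mem_univ, and_true] at hp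
  rcases hp with rfl | hp
  · simp only [splitPiece, leftEnd, h0, lowerPiece] at hadj hlt ⊢
    split_ifs <;> simp only [Prod.mk.injEq, Bool.false_eq_true, and_true, and_false] <;> omega
  obtain ⟨j, b⟩ := p
  have := he j hp
  simp only [Finset.mem_Ico] at hp
  cases b <;> simp only [splitPiece, leftEnd, lowerPiece] at hadj hlt ⊢ <;> split_ifs <;>
    simp only [Prod.mk.injEq, Bool.false_eq_true, Bool.true_eq_false, and_true, and_false] <;>
    omega

theorem lowerPiece_mem_splitIndex (haN : a ≤ N) {i : ℕ} (hi : i < a + N) :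
    lowerPiece a i ∈ splitIndex N := by
  unfold lowerPiece splitIndex
  split_ifs <;> simp only [Fintype.univ_bool, Finset.mem_insert, Prod.mk.injEq, Bool.true_eq_false,
    and_true, and_false, Finset.mem_product, Finset.mem_Ico, Finset.mem_singleton, or_true,
    or_false, false_or] <;> omega

theorem adj_splitPiece_lowerPiece (h0 : e 0 = a) (i : ℕ) :
    (splitPiece a e (lowerPiece a i)).2 = i ∨ (splitPiece a e (lowerPiece a i)).1 = i + 1 := by
  rcases lt_trichotomy i a with h | rfl | h
  · simp only [lowerPiece, splitPiece, leftEnd, h.le, ↓reduceIte]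
    omega
  · simp [lowerPiece, splitPiece, h0]
  · simp only [lowerPiece, splitPiece, h.not_ge, if_false]
    omega

theorem lt_rank_lowerPiece (i : ℕ) :
    2 * (lowerPiece a i).1 < (2 * (i : ℤ) - 2 * a + 1).natAbs := by
  unfold lowerPiece
  split_ifs <;> dsimp only <;> omega

theorem isTree_intervalGraph_splitPiece (haN : a ≤ N) (he : IsSplitting a N e) (h0 : e 0 = a) :
    (intervalGraph (a + N) fun p : splitIndex N => splitPiece a e p).IsTree := by
  refine SimpleGraph.isTree_of_lower_neighbor
    (Sum.elim (fun p => 2 * p.1.1) fun i => (2 * (i : ℤ) - 2 * a + 1).natAbs)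
    (.inl ⟨(0, false), by simp [splitIndex]⟩) ?_ ?_ ?_
  · rintro (p | i) (q | i') h <;> simp only [intervalGraph.adj_inl_inr, intervalGraph.adj_inr_inl,
      intervalGraph.not_adj_inl_inl, intervalGraph.not_adj_inr_inr, Sum.elim_inl,
      Sum.elim_inr] at h ⊢ <;> omega
  · rintro (p | i) (q | i') (r | i'') hu hw hlu hlw <;> simp only [intervalGraph.adj_inl_inr,
      intervalGraph.adj_inr_inl, intervalGraph.not_adj_inl_inl, intervalGraph.not_adj_inr_inr,
      Sum.elim_inl, Sum.elim_inr] at hu hw hlu hlw ⊢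
    · have h1 := eq_of_adj_splitPiece (Int.natCast_nonneg _) hu hlu
      have h2 := eq_of_adj_splitPiece (Int.natCast_nonneg _) hw hlw
      exact congrArg _ (Fin.ext (by omega))
    · exact congrArg _ <| Subtype.ext <| (eq_lowerPiece_of_adj_splitPiece he h0 q.2 hu hlu).trans
        (eq_lowerPiece_of_adj_splitPiece he h0 r.2 hw hlw).symm
  · rintro (⟨⟨j, b⟩, hp⟩ | i) hroot
    · have hj : j ∈ Finset.Ico 1 N := by
        simp only [splitIndex, Finset.mem_insert, Finset.mem_product, Finset.mem_univ,
          and_true] at hp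
        rcases hp with h | h
        · exact absurd (congrArg Sum.inl (Subtype.ext h)) hroot
        · exact h
      obtain ⟨hlo, hhi⟩ := he j hj
      simp only [Finset.mem_Ico] at hj
      refine ⟨.inr ⟨(e j).toNat, by omega⟩, ?_, ?_⟩ <;> cases b <;>
        simp only [splitPiece, intervalGraph.adj_inl_inr, Sum.elim_inl, Sum.elim_inr,
          Int.ofNat_toNat] <;> omega
    · exact ⟨.inl ⟨lowerPiece a i, lowerPiece_mem_splitIndex haN i.2⟩,
        by simpa using adj_splitPiece_lowerPiece h0 i, lt_rank_lowerPiece i⟩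

theorem isAdmissible_splitSystem (haN : a ≤ N) (he : IsSplitting a N e) :
    IsAdmissible (a + N) (splitSystem a N e) := by
  -- `e 0` does not occur in `splitSystem a N e`, but `splitPiece a e (0, false)` is `[a, a]`
  -- only when `e 0 = a`.
  wlog h0 : e 0 = a
  · have hcongr : ∀ j ∈ Finset.Ico 1 N, Function.update e 0 (a : ℤ) j = e j := fun j hj =>
      Function.update_of_ne (by simp only [Finset.mem_Ico] at hj; omega) _ _
    rw [← splitSystem_congr hcongr]
    exact this haN (fun j hj => hcongr j hj ▸ he j hj) (by simp)
  have hmap : (splitIndex N).val.map (splitPiece a e) =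
      Finset.univ.val.map fun p : splitIndex N => splitPiece a e p := by
    rw [Finset.univ_eq_attach, Finset.attach_val]
    exact (Multiset.attach_map_val' _ _).symm
  rw [splitSystem_eq_map h0, hmap]
  exact isAdmissible_of_isTree (isTree_intervalGraph_splitPiece haN he h0)

end Admissibility

section Counting

variable {a N : ℕ}

theorem factorial_le_ncard_splitSystems (hN : 1 ≤ N) (haN : a ≤ N) :
    (N - 1).factorial ≤ {S : Multiset (ℤ × ℤ) |
      IsProperSystem (a + N) (fun x => (min ((N : ℤ) - a + x) ((a : ℤ) + N - x)).toNat) S ∧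
      IsAdmissible (a + N) S ∧ S.card = 2 * N - 1}.ncard := by
  classical
  let cuts : Finset (Finset.Ico 1 N → ℤ) :=
    Fintype.piFinset fun j => Finset.Ico (a : ℤ) (a + j.1)
  let extend (v : Finset.Ico 1 N → ℤ) (j : ℕ) : ℤ :=
    if hj : j ∈ Finset.Ico 1 N then v ⟨j, hj⟩ else 0
  have hextend : ∀ v j (hj : j ∈ Finset.Ico 1 N), extend v j = v ⟨j, hj⟩ :=
    fun v j hj => dif_pos hj
  have hsplit : ∀ v ∈ cuts, IsSplitting a N (extend v) := fun v hv j hj => by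
    simpa [hextend v j hj] using Fintype.mem_piFinset.1 hv ⟨j, hj⟩
  have hcard : cuts.card = (N - 1).factorial := by
    rw [Fintype.card_piFinset, Finset.prod_coe_sort (Finset.Ico 1 N)
      fun j => (Finset.Ico (a : ℤ) (a + j)).card]
    obtain ⟨M, rfl⟩ := Nat.exists_eq_add_of_le' hN
    simp [Finset.prod_Ico_id_eq_factorial]
  calc (N - 1).factorial = (cuts : Set (Finset.Ico 1 N → ℤ)).ncard := by
        rw [Set.ncard_coe_finset, hcard]
    _ ≤ _ := by
      refine Set.ncard_le_ncard_of_injOn (fun v => splitSystem a N (extend v))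
        (fun v hv => ⟨isProperSystem_splitSystem hN (hsplit v hv),
          isAdmissible_splitSystem haN (hsplit v hv), card_splitSystem hN⟩)
        (fun v hv w _ hvw => funext fun ⟨j, hj⟩ => ?_) ?_
      · simpa [hextend _ j hj] using
          eqOn_of_splitSystem_eq (fun j hj => (hsplit v hv j hj).1) hvw j hj
      · refine (Multiset.finite_card_eq_of_forall_mem
          (Finset.Icc (0 : ℤ) (a + N) ×ˢ Finset.Icc (0 : ℤ) (a + N)) (2 * N - 1)).subset ?_
        rintro S ⟨hS, -, hcardS⟩
        refine ⟨hcardS, fun I hI => ?_⟩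
        have := hS.1 I hI
        simp only [Finset.mem_product, Finset.mem_Icc]
        omega

theorem pentagonSystem_eq_splitSystem (ha : 1 ≤ a) (haN : a ≤ N) (h g : ℕ → ℤ) :
    pentagonSystem a N h g = splitSystem a N fun j => if j < a then h j else g j := by
  have hIcc : ∀ b c : ℕ, 1 ≤ c → Finset.Icc b (c - 1) = Finset.Ico b c := fun b c hc => by
    ext; simp only [Finset.mem_Icc, Finset.mem_Ico]; omega
  have hsplit : (Finset.Ico 1 N).val = (Finset.Ico 1 a).val + (Finset.Ico a N).val :=
    (Multiset.Ico_add_Ico_eq_Ico ha haN).symm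
  rw [pentagonSystem, splitSystem, hIcc 1 a ha, hIcc a N (ha.trans haN), hsplit,
    Multiset.add_bind]
  congr 2 <;> refine Multiset.bind_congr fun j hj => ?_ <;>
    simp only [Finset.mem_val, Finset.mem_Ico] at hj
  · rw [if_pos hj.2, leftEnd, max_eq_left (by omega)]
  · rw [if_neg (by omega), leftEnd, max_eq_right (by omega)]

theorem eqOn_of_pentagonSystem_eq (ha : 1 ≤ a) (haN : a ≤ N) {h g h' g' : ℕ → ℤ}
    (hh : ∀ j, 1 ≤ j → j ≤ a - 1 → (a : ℤ) ≤ h j) (hg : ∀ j, a ≤ j → j ≤ N - 1 → (a : ℤ) ≤ g j)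
    (heq : pentagonSystem a N h g = pentagonSystem a N h' g') :
    (∀ j, 1 ≤ j → j ≤ a - 1 → h j = h' j) ∧ (∀ j, a ≤ j → j ≤ N - 1 → g j = g' j) := by
  rw [pentagonSystem_eq_splitSystem ha haN, pentagonSystem_eq_splitSystem ha haN] at heq
  have hcut := eqOn_of_splitSystem_eq (fun j hj => ?_) heq
  · refine ⟨fun j hj₁ hj₂ => ?_, fun j hj₁ hj₂ => ?_⟩
    · simpa [show j < a by omega] using hcut j (Finset.mem_Ico.2 ⟨hj₁, by omega⟩)
    · simpa [show ¬ j < a by omega] using hcut j (Finset.mem_Ico.2 ⟨by omega, by omega⟩)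
  simp only [Finset.mem_Ico] at hj
  split_ifs with hja
  · exact hh j hj.1 (by omega)
  · exact hg j (by omega) (by omega)

end Counting

theorem factorial_sub_one_mul_pow_le {n a N : ℕ} (ha : 1 ≤ a) (hna : n ≤ a) (haN : a ≤ N) :
    (a - 1).factorial * n ^ (N - a) ≤ (N - 1).factorial :=
  calc (a - 1).factorial * n ^ (N - a) ≤ (a - 1).factorial * (a - 1 + 1) ^ (N - a) := by
        rw [Nat.sub_add_cancel ha]; gcongr
    _ ≤ (a - 1 + (N - a)).factorial := Nat.factorial_mul_pow_le_factorial
    _ = (N - 1).factorial := by congr 1; omega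

theorem statement8_general (n d d₁ : ℕ) (hn : 1 ≤ n) (hd : d₁ < d) :
    (∀ h g h' g' : ℕ → ℤ,
      (∀ j : ℕ, 1 ≤ j → j ≤ n * (d - d₁) - 1 →
        (n * (d - d₁) : ℤ) ≤ h j ∧ h j ≤ (n * (d - d₁) : ℤ) + j - 1) →
      (∀ j : ℕ, n * (d - d₁) ≤ j → j ≤ n * d - 1 →
        (n * (d - d₁) + n * ((j - n * (d - d₁)) / n) : ℤ) ≤ g j ∧
          g j ≤ (n * (d - d₁) + n * ((j - n * (d - d₁)) / n) : ℤ) + n - 1) →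
      (∀ j : ℕ, 1 ≤ j → j ≤ n * (d - d₁) - 1 →
        (n * (d - d₁) : ℤ) ≤ h' j ∧ h' j ≤ (n * (d - d₁) : ℤ) + j - 1) →
      (∀ j : ℕ, n * (d - d₁) ≤ j → j ≤ n * d - 1 →
        (n * (d - d₁) + n * ((j - n * (d - d₁)) / n) : ℤ) ≤ g' j ∧
          g' j ≤ (n * (d - d₁) + n * ((j - n * (d - d₁)) / n) : ℤ) + n - 1) →
      pentagonSystem (n * (d - d₁)) (n * d) h g =
        pentagonSystem (n * (d - d₁)) (n * d) h' g' →
      (∀ j : ℕ, 1 ≤ j → j ≤ n * (d - d₁) - 1 → h j = h' j) ∧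
        (∀ j : ℕ, n * (d - d₁) ≤ j → j ≤ n * d - 1 → g j = g' j)) ∧
    Nat.factorial (n * (d - d₁) - 1) * n ^ (n * d₁) ≤
      Set.ncard {S : Multiset (ℤ × ℤ) |
        IsProperSystem (n * (2 * d - d₁))
          (fun i : ℤ => (min ((n : ℤ) * d₁ + i) ((n * (2 * d - d₁) : ℕ) - i)).toNat) S ∧
        IsAdmissible (n * (2 * d - d₁)) S ∧
        S.card = 2 * (n * d) - 1} := by
  obtain ⟨ha, hna, haN, hNa⟩ : 1 ≤ n * (d - d₁) ∧ n ≤ n * (d - d₁) ∧ n * (d - d₁) ≤ n * d ∧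
      n * d - n * (d - d₁) = n * d₁ := by
    refine ⟨Nat.mul_pos hn (by omega), Nat.le_mul_of_pos_right n (by omega),
      Nat.mul_le_mul_left n (by omega), ?_⟩
    rw [← Nat.mul_sub, Nat.sub_sub_self hd.le]
  have hcast : ((n * (d - d₁) : ℕ) : ℤ) = n * (d - d₁) := by push_cast [hd.le]; ring
  refine ⟨fun h g h' g' hh hg _ _ heq => eqOn_of_pentagonSystem_eq ha haN
    (fun j hj₁ hj₂ => hcast ▸ (hh j hj₁ hj₂).1) (fun j hj₁ hj₂ => ?_) heq, ?_⟩
  · have hq : 0 ≤ (n : ℤ) * ((j - n * (d - d₁)) / n) :=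
      mul_nonneg (by positivity) (Int.ediv_nonneg (by rw [← hcast]; omega) (by positivity))
    linarith [(hg j hj₁ hj₂).1]
  have hm : n * (2 * d - d₁) = n * (d - d₁) + n * d := by
    rw [← Nat.mul_add]; congr 1; omega
  have hmZ : (n : ℤ) * (2 * d - d₁) = ((n * (d - d₁) : ℕ) : ℤ) + ((n * d : ℕ) : ℤ) := by
    rw [hcast]; push_cast; ring
  have hσ : (n : ℤ) * d₁ = ((n * d : ℕ) : ℤ) - ((n * (d - d₁) : ℕ) : ℤ) := by
    rw [hcast]; push_cast; ring
  rw [hm, hmZ, hσ, Nat.cast_add, ← hNa]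
  exact (factorial_sub_one_mul_pow_le ha hna haN).trans
    (factorial_le_ncard_splitSystems (ha.trans haN) haN)

/-- Let `n ≥ 1` and `1 ≤ d₁ < d`; set `a = n(d - d₁)` and `m = n(2d - d₁)`.
On the set of tuples `(h, g)` with `a ≤ h j ≤ a + j - 1` for `j ∈ {1, …, a-1}` and
`a + n⌊(j-a)/n⌋ ≤ g j ≤ a + n⌊(j-a)/n⌋ + n - 1` for `j ∈ {a, …, nd-1}`, the map
`(h, g) ↦ Λ(h, g)` is injective, and consequently the number of admissible proper systems
with parameters `m = n(2d - d₁)` and `σ(i) = min(n d₁ + i, m - i)`, consisting of exactly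
`2nd - 1` intervals, is at least `(a - 1)! · n^(n d₁)`. -/
theorem statement8 (n d d₁ : ℕ) (hn : 1 ≤ n) (hd₁ : 1 ≤ d₁) (hd : d₁ < d) :
    (∀ h g h' g' : ℕ → ℤ,
      (∀ j : ℕ, 1 ≤ j → j ≤ n * (d - d₁) - 1 →
        (n * (d - d₁) : ℤ) ≤ h j ∧ h j ≤ (n * (d - d₁) : ℤ) + j - 1) →
      (∀ j : ℕ, n * (d - d₁) ≤ j → j ≤ n * d - 1 →
        (n * (d - d₁) + n * ((j - n * (d - d₁)) / n) : ℤ) ≤ g j ∧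
          g j ≤ (n * (d - d₁) + n * ((j - n * (d - d₁)) / n) : ℤ) + n - 1) →
      (∀ j : ℕ, 1 ≤ j → j ≤ n * (d - d₁) - 1 →
        (n * (d - d₁) : ℤ) ≤ h' j ∧ h' j ≤ (n * (d - d₁) : ℤ) + j - 1) →
      (∀ j : ℕ, n * (d - d₁) ≤ j → j ≤ n * d - 1 →
        (n * (d - d₁) + n * ((j - n * (d - d₁)) / n) : ℤ) ≤ g' j ∧
          g' j ≤ (n * (d - d₁) + n * ((j - n * (d - d₁)) / n) : ℤ) + n - 1) →
      pentagonSystem (n * (d - d₁)) (n * d) h g =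
        pentagonSystem (n * (d - d₁)) (n * d) h' g' →
      (∀ j : ℕ, 1 ≤ j → j ≤ n * (d - d₁) - 1 → h j = h' j) ∧
        (∀ j : ℕ, n * (d - d₁) ≤ j → j ≤ n * d - 1 → g j = g' j)) ∧
    Nat.factorial (n * (d - d₁) - 1) * n ^ (n * d₁) ≤
      Set.ncard {S : Multiset (ℤ × ℤ) |
        IsProperSystem (n * (2 * d - d₁))
          (fun i : ℤ => (min ((n : ℤ) * d₁ + i) ((n * (2 * d - d₁) : ℕ) - i)).toNat) S ∧
        IsAdmissible (n * (2 * d - d₁)) S ∧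
        S.card = 2 * (n * d) - 1} :=
  statement8_general n d d₁ hn hd
end
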